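/- arXiv:1805.01422 — 6 statements merged into one kernel-verified Lean document; each statement's English description precedes it below -/
import Mathlib

section
/- Let P be a nonempty convex set of probability measures on a measurable space (Ω, 𝒜) and θ : P → ℝ a linear, non-constant functional. Then there exist constants c0, c1 > 0 such that ω_TV(ε) ≥ c0·ε and ω_H(ε) ≥ (c0/2)·ε² for all ε ∈ [0, c1]. -/
open MeasureTheory ProbabilityTheory ENNReal

namespace PrivacyPaper

variable {X Z Ω : Type*} [MeasurableSpace X] [MeasurableSpace Z] [MeasurableSpace Ω]

/-- Total variation distance between two measures:
`d_TV(P0, P1) = sup_{A measurable} |P0(A) - P1(A)|`. -/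
noncomputable def dTV (P0 P1 : Measure Ω) : ℝ :=
  ⨆ A : {A : Set Ω // MeasurableSet A}, |(P0 A.1).toReal - (P1 A.1).toReal|

/-- Hellinger distance between two measures, computed via densities with respect to the
dominating measure `P0 + P1`. -/
noncomputable def dH (P0 P1 : Measure Ω) : ℝ :=
  Real.sqrt (∫ ω, (Real.sqrt ((P0.rnDeriv (P0 + P1) ω).toReal) -
    Real.sqrt ((P1.rnDeriv (P0 + P1) ω).toReal)) ^ 2 ∂(P0 + P1))

/-- Hellinger affinity `ρ(P0, P1) = ∫ √(p0 p1) dμ`, with `μ = P0 + P1`. -/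
noncomputable def hellingerAffinity (P0 P1 : Measure Ω) : ℝ :=
  ∫ ω, Real.sqrt ((P0.rnDeriv (P0 + P1) ω).toReal * (P1.rnDeriv (P0 + P1) ω).toReal)
    ∂(P0 + P1)

/-- Modulus of continuity of a functional `θ` over `P` with respect to a distance `d`,
with values in `ℝ≥0∞`. -/
noncomputable def modulus (d : Measure X → Measure X → ℝ) (P : Set (Measure X))
    (θ : Measure X → ℝ) (ε : ℝ) : ℝ≥0∞ :=
  ⨆ (P0 : Measure X) (_ : P0 ∈ P) (P1 : Measure X) (_ : P1 ∈ P) (_ : d P0 P1 ≤ ε),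
    ENNReal.ofReal |θ P0 - θ P1|

/-- Total variation modulus of continuity `ω_TV`. -/
noncomputable def omegaTV (P : Set (Measure X)) (θ : Measure X → ℝ) : ℝ → ℝ≥0∞ :=
  modulus dTV P θ

/-- Hellinger modulus of continuity `ω_H`. -/
noncomputable def omegaH (P : Set (Measure X)) (θ : Measure X → ℝ) : ℝ → ℝ≥0∞ :=
  modulus dH P θ

/-- Push-forward of a measure through a channel `c` (given as a map into measures):
`(c P)(A) = ∫ c(A|x) dP(x)`. -/
noncomputable def push (c : X → Measure Z) (μ : Measure X) : Measure Z := μ.bind c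

/-- Privatized Hellinger modulus `ω_H^{(Q1)}`. -/
noncomputable def omegaHQ (c : X → Measure Z) (P : Set (Measure X)) (θ : Measure X → ℝ) :
    ℝ → ℝ≥0∞ :=
  modulus (fun P0 P1 => dH (push c P0) (push c P1)) P θ

/-- Left limit at `m ∈ ℝ≥0∞` of a nondecreasing `ℝ≥0∞`-valued function on `[0,∞)`:
`f(m⁻) = sup_{0 ≤ y < m} f(y)`. -/
noncomputable def leftLimE (f : ℝ → ℝ≥0∞) (m : ℝ≥0∞) : ℝ≥0∞ :=
  ⨆ (y : ℝ) (_ : 0 ≤ y) (_ : ENNReal.ofReal y < m), f y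

/-- Right limit at `x ∈ ℝ` of a nondecreasing `ℝ≥0∞`-valued function:
`f(x⁺) = inf_{y > x} f(y)`. -/
noncomputable def rightLimE (f : ℝ → ℝ≥0∞) (x : ℝ) : ℝ≥0∞ :=
  ⨅ (y : ℝ) (_ : x < y), f y

/-- Left limit of a nondecreasing loss function at `m ∈ ℝ≥0∞`, with the convention
`l(0⁻) = l(0)`, as an element of `ℝ≥0∞`. -/
noncomputable def lossLeftLim (l : ℝ → ℝ) (m : ℝ≥0∞) : ℝ≥0∞ :=
  if m = 0 then ENNReal.ofReal (l 0)
  else ⨆ (y : ℝ) (_ : 0 ≤ y) (_ : ENNReal.ofReal y < m), ENNReal.ofReal (l y)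

/-- A (randomized) test is a measurable function with values in `[0,1]`. -/
def IsTest (φ : Ω → ℝ) : Prop := Measurable φ ∧ ∀ ω, 0 ≤ φ ω ∧ φ ω ≤ 1

/-- Risk of a test: `∫ φ dμ0 + ∫ (1 - φ) dμ1`. -/
noncomputable def testRisk (μ0 μ1 : Measure Ω) (φ : Ω → ℝ) : ℝ :=
  (∫ ω, φ ω ∂μ0) + ∫ ω, (1 - φ ω) ∂μ1

/-- Testing affinity of a pair of measures: `π(μ0, μ1) = inf_φ (∫ φ dμ0 + ∫ (1-φ) dμ1)`. -/
noncomputable def pairAffinity (μ0 μ1 : Measure Ω) : ℝ :=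
  sInf {r : ℝ | ∃ φ : Ω → ℝ, IsTest φ ∧ r = testRisk μ0 μ1 φ}

/-- Testing affinity of two sets of measures: `π(M0, M1) = sup π(μ0, μ1)`. -/
noncomputable def setAffinity (M0 M1 : Set (Measure Ω)) : ℝ :=
  sSup {r : ℝ | ∃ μ0 ∈ M0, ∃ μ1 ∈ M1, r = pairAffinity μ0 μ1}

/-- The set of finite convex combinations of elements of `M`. -/
def convComb (M : Set (Measure Ω)) : Set (Measure Ω) :=
  {μ | ∃ (m : ℕ) (w : Fin m → ℝ≥0∞) (ν : Fin m → Measure Ω),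
    (∑ i, w i) = 1 ∧ (∀ i, ν i ∈ M) ∧ μ = ∑ i, w i • ν i}

/-- The upper affinity `η_A^{(n)}(Q, Δ)`, for the channel described through the map
`QPn : P ↦ Q P^{⊗n}`. -/
noncomputable def etaA {Zn : Type*} [MeasurableSpace Zn] (QPn : Measure X → Measure Zn)
    (P : Set (Measure X)) (θ : Measure X → ℝ) (Δ : ℝ) : ℝ :=
  ⨆ t : ℝ, setAffinity (convComb (QPn '' {μ | μ ∈ P ∧ θ μ ≤ t}))
    (convComb (QPn '' {μ | μ ∈ P ∧ t + Δ ≤ θ μ}))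

/-- The affinity `η_2^{(n)}(Q, Δ)` (no convex hulls). -/
noncomputable def eta2 {Zn : Type*} [MeasurableSpace Zn] (QPn : Measure X → Measure Zn)
    (P : Set (Measure X)) (θ : Measure X → ℝ) (Δ : ℝ) : ℝ :=
  ⨆ t : ℝ, setAffinity (QPn '' {μ | μ ∈ P ∧ θ μ ≤ t}) (QPn '' {μ | μ ∈ P ∧ t + Δ ≤ θ μ})

/-- `Δ_A^{(n)}(Q, η) = sup {Δ ≥ 0 : η_A^{(n)}(Q, Δ) > η}`, as an element of `ℝ≥0∞`. -/
noncomputable def DeltaA {Zn : Type*} [MeasurableSpace Zn] (QPn : Measure X → Measure Zn)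
    (P : Set (Measure X)) (θ : Measure X → ℝ) (η : ℝ) : ℝ≥0∞ :=
  ⨆ (Δ : ℝ) (_ : 0 ≤ Δ) (_ : η < etaA QPn P θ Δ), ENNReal.ofReal Δ

/-- `Δ_2^{(n)}(Q, η) = sup {Δ ≥ 0 : η_2^{(n)}(Q, Δ) > η}`, as an element of `ℝ≥0∞`. -/
noncomputable def Delta2 {Zn : Type*} [MeasurableSpace Zn] (QPn : Measure X → Measure Zn)
    (P : Set (Measure X)) (θ : Measure X → ℝ) (η : ℝ) : ℝ≥0∞ :=
  ⨆ (Δ : ℝ) (_ : 0 ≤ Δ) (_ : η < eta2 QPn P θ Δ), ENNReal.ofReal Δ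

/-- The privatized distribution `Q P^{⊗n}` of the observation vector. -/
noncomputable def privProd {Zn : Type*} [MeasurableSpace Zn] (n : ℕ)
    (Q : (Fin n → X) → Measure Zn) (μ : Measure X) : Measure Zn :=
  (Measure.pi fun _ : Fin n => μ).bind Q

/-- The `Q`-privatized minimax risk `M_n(Q, P, θ)` (with values in `ℝ≥0∞`), where the channel
is described through the map `QPn : P ↦ Q P^{⊗n}`. -/
noncomputable def minimaxRisk {Zn : Type*} [MeasurableSpace Zn] (l : ℝ → ℝ)
    (QPn : Measure X → Measure Zn) (P : Set (Measure X)) (θ : Measure X → ℝ) : ℝ≥0∞ :=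
  ⨅ (est : Zn → ℝ) (_ : Measurable est), ⨆ (μ : Measure X) (_ : μ ∈ P),
    ∫⁻ z, ENNReal.ofReal (l |est z - θ μ|) ∂(QPn μ)

/-- Iterated sequential integral: `seqIntegral K n x g` is
`∫ ⋯ ∫ g(z_1,…,z_n) K_{n-1}(dz_n | x_n, z_{1:n-1}) ⋯ K_0(dz_1 | x_1)`. -/
noncomputable def seqIntegral (K : (i : ℕ) → X × (Fin i → Z) → Measure Z) :
    (n : ℕ) → (Fin n → X) → ((Fin n → Z) → ℝ≥0∞) → ℝ≥0∞
  | 0, _, g => g fun i => i.elim0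
  | n + 1, x, g => seqIntegral K n (fun i => x i.castSucc)
      fun zpre => ∫⁻ zn, g (Fin.snoc zpre zn) ∂(K n (x (Fin.last n), zpre))

/-- An `α`-sequentially interactive channel: `Q` is obtained by sequential composition of
Markov kernels `K i : X × Z^i → Z`, each of which satisfies the `α`-differential privacy
ratio bound in its `X`-argument. -/
def IsSeqInteractive (n : ℕ) (α : ℝ) (Q : Kernel (Fin n → X) (Fin n → Z)) : Prop :=
  ∃ K : (i : ℕ) → Kernel (X × (Fin i → Z)) Z,
    (∀ i, IsMarkovKernel (K i)) ∧
    (∀ (i : ℕ) (x x' : X) (zpre : Fin i → Z) (A : Set Z), MeasurableSet A →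
      K i (x, zpre) A ≤ ENNReal.ofReal (Real.exp α) * K i (x', zpre) A) ∧
    (∀ (x : Fin n → X) (A : Set (Fin n → Z)), MeasurableSet A →
      Q x A = seqIntegral (fun i p => K i p) n x (A.indicator fun _ => 1))

/-- The `α`-private minimax risk `M_{n,α}(P, θ)`: infimum over all output dimensions
`q ∈ ℕ` and all `α`-sequentially interactive channels from `X^n` to `(ℝ^q)^n`. -/
noncomputable def privMinimaxRisk (n : ℕ) (α : ℝ) (l : ℝ → ℝ) (P : Set (Measure X))
    (θ : Measure X → ℝ) : ℝ≥0∞ :=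
  ⨅ (q : ℕ) (Q : Kernel (Fin n → X) (Fin n → (Fin q → ℝ))) (_ : IsMarkovKernel Q)
    (_ : IsSeqInteractive n α Q),
      minimaxRisk l (privProd n fun x => Q x) P θ

/-- The mixture `λ P0 + (1-λ) P1` of two measures. -/
noncomputable def mix (lam : ℝ) (P0 P1 : Measure Ω) : Measure Ω :=
  ENNReal.ofReal lam • P0 + ENNReal.ofReal (1 - lam) • P1

/-- Convexity of a set of measures. -/
def ConvexMeasureSet (P : Set (Measure Ω)) : Prop :=
  ∀ P0 ∈ P, ∀ P1 ∈ P, ∀ lam : ℝ, 0 ≤ lam → lam ≤ 1 → mix lam P0 P1 ∈ P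

/-- Linearity of a functional on a (convex) set of measures. -/
def LinearFunctional (P : Set (Measure X)) (θ : Measure X → ℝ) : Prop :=
  ∀ P0 ∈ P, ∀ P1 ∈ P, ∀ lam : ℝ, 0 ≤ lam → lam ≤ 1 →
    θ (mix lam P0 P1) = lam * θ P0 + (1 - lam) * θ P1

/-- A family of measures is dominated if all its members are absolutely continuous with
respect to a single σ-finite measure. -/
def Dominated (M : Set (Measure Ω)) : Prop :=
  ∃ ν : Measure Ω, SigmaFinite ν ∧ ∀ μ ∈ M, μ ≪ ν

/-- Condition (A): the functional `θ` is bounded on `P`. -/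
def CondA (P : Set (Measure X)) (θ : Measure X → ℝ) : Prop := ∃ c : ℝ, ∀ μ ∈ P, |θ μ| ≤ c

/-- Condition (B): the loss `l : [0,∞) → [0,∞)` is nondecreasing, `l 0 = 0` and
`l(3t/2) ≤ a l(t)` for all `t ≥ 0`. -/
def CondB (l : ℝ → ℝ) (a : ℝ) : Prop :=
  (∀ u v : ℝ, 0 ≤ u → u ≤ v → l u ≤ l v) ∧ (∀ u : ℝ, 0 ≤ u → 0 ≤ l u) ∧ l 0 = 0 ∧
    ∀ u : ℝ, 0 ≤ u → l (3 / 2 * u) ≤ a * l u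

/-- Sup-norm of a (bounded) function. -/
noncomputable def supNorm (f : X → ℝ) : ℝ := ⨆ x, |f x|

/-- The binary privatization channel `Q_1^{(α,ℓ)}`, supported on `{-z0, z0}` with
`z0 = ‖ℓ‖_∞ (e^α + 1)/(e^α - 1)`, giving the point `z0` probability `(1 + ℓ(x)/z0)/2`. -/
noncomputable def binChannel (α : ℝ) (ℓ : X → ℝ) (x : X) : Measure ℝ :=
  ENNReal.ofReal ((1 + ℓ x / (supNorm ℓ * ((Real.exp α + 1) / (Real.exp α - 1)))) / 2) •
      Measure.dirac (supNorm ℓ * ((Real.exp α + 1) / (Real.exp α - 1))) +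
    ENNReal.ofReal ((1 - ℓ x / (supNorm ℓ * ((Real.exp α + 1) / (Real.exp α - 1)))) / 2) •
      Measure.dirac (-(supNorm ℓ * ((Real.exp α + 1) / (Real.exp α - 1))))

/-- `g_d(Q, η) = inf { d(P0, P1) : π(Q P0^{⊗n}, Q P1^{⊗n}) ≤ η }`, as an element of `ℝ≥0∞`
(with `inf ∅ = ∞`). -/
noncomputable def gDist {Zn : Type*} [MeasurableSpace Zn] (d : Measure X → Measure X → ℝ)
    (QPn : Measure X → Measure Zn) (P : Set (Measure X)) (η : ℝ) : ℝ≥0∞ :=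
  ⨅ (P0 : Measure X) (_ : P0 ∈ P) (P1 : Measure X) (_ : P1 ∈ P)
    (_ : pairAffinity (QPn P0) (QPn P1) ≤ η), ENNReal.ofReal (d P0 P1)

/-- Integral of a bounded measurable function against a finite signed measure, via the
Jordan decomposition. -/
noncomputable def sInt (φ : Ω → ℝ) (σ : MeasureTheory.SignedMeasure Ω) : ℝ :=
  (∫ ω, φ ω ∂σ.toJordanDecomposition.posPart) - ∫ ω, φ ω ∂σ.toJordanDecomposition.negPart

/-- Membership in the set `𝕋 = {φ ∈ L∞(μ) : a ≤ ∫ φ f dμ ≤ b  ∀ f ∈ L1(μ), ‖f‖_{L1} ≤ 1}`. -/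
def memT (μ : Measure Ω) (a b : ℝ) (φ : Ω → ℝ) : Prop :=
  Measurable φ ∧ (∃ c : ℝ, ∀ᵐ ω ∂μ, |φ ω| ≤ c) ∧
    ∀ f : Ω → ℝ, Integrable f μ → (∫ ω, |f ω| ∂μ) ≤ 1 →
      a ≤ (∫ ω, φ ω * f ω ∂μ) ∧ (∫ ω, φ ω * f ω ∂μ) ≤ b

/-- The function `G(s,t) = log((1-s)/(1-t)) / log((t/s)·(1-s)/(1-t))`, with `G(s,s) = s`. -/
noncomputable def Gfun (s t : ℝ) : ℝ :=
  if s = t then s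
  else Real.log ((1 - s) / (1 - t)) / Real.log (t / s * ((1 - s) / (1 - t)))


lemma sqrt_sub_sq_le_abs {a b : ℝ} (ha : 0 ≤ a) (hb : 0 ≤ b) :
    (Real.sqrt a - Real.sqrt b) ^ 2 ≤ |a - b| := by
  rcases le_total b a with h | h
  · rw [abs_of_nonneg (by linarith)]
    nlinarith [Real.sq_sqrt ha, Real.sq_sqrt hb, Real.sqrt_nonneg a, Real.sqrt_nonneg b,
      Real.sqrt_le_sqrt h]
  · rw [abs_of_nonpos (by linarith)]
    nlinarith [Real.sq_sqrt ha, Real.sq_sqrt hb, Real.sqrt_nonneg a, Real.sqrt_nonneg b,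
      Real.sqrt_le_sqrt h]

lemma mix_apply_aux {lam : ℝ} (hl : 0 ≤ lam) (hl1 : lam ≤ 1) (P0 P1 : Measure Ω)
    [IsProbabilityMeasure P0] [IsProbabilityMeasure P1] {A : Set Ω} :
    ((mix lam P0 P1) A).toReal = lam * (P0 A).toReal + (1 - lam) * (P1 A).toReal := by
  simp only [mix, Measure.coe_add, Pi.add_apply, Measure.smul_apply, smul_eq_mul]
  rw [ENNReal.toReal_add (by finiteness) (by finiteness), ENNReal.toReal_mul,
    ENNReal.toReal_mul, ENNReal.toReal_ofReal hl, ENNReal.toReal_ofReal (by linarith)]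

lemma dTV_mix_le {lam : ℝ} (hl : 0 ≤ lam) (hl1 : lam ≤ 1) (P0 P1 : Measure Ω)
    [IsProbabilityMeasure P0] [IsProbabilityMeasure P1] :
    dTV (mix lam P1 P0) P0 ≤ lam := by
  apply ciSup_le
  intro A
  rw [mix_apply_aux hl hl1]
  have h0 : (P0 A.1).toReal ≤ 1 := by
    apply ENNReal.toReal_le_of_le_ofReal one_pos.le; simpa using prob_le_one
  have h1 : (P1 A.1).toReal ≤ 1 := by
    apply ENNReal.toReal_le_of_le_ofReal one_pos.le; simpa using prob_le_one
  have h0' : 0 ≤ (P0 A.1).toReal := ENNReal.toReal_nonneg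
  have h1' : 0 ≤ (P1 A.1).toReal := ENNReal.toReal_nonneg
  have : lam * (P1 A.1).toReal + (1 - lam) * (P0 A.1).toReal - (P0 A.1).toReal
      = lam * ((P1 A.1).toReal - (P0 A.1).toReal) := by ring
  rw [this, abs_mul, abs_of_nonneg hl]
  calc lam * |(P1 A.1).toReal - (P0 A.1).toReal| ≤ lam * 1 := by
        apply mul_le_mul_of_nonneg_left _ hl
        rw [abs_le]; constructor <;> linarith
    _ = lam := mul_one lam

lemma dH_mix_le {lam : ℝ} (hl : 0 ≤ lam) (hl1 : lam ≤ 1) (P0 P1 : Measure Ω)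
    [IsProbabilityMeasure P0] [IsProbabilityMeasure P1] :
    dH (mix lam P1 P0) P0 ≤ Real.sqrt (2 * lam) := by
  set M := mix lam P1 P0 with hM
  set ν := M + P0 with hν
  haveI : IsFiniteMeasure (ENNReal.ofReal lam • P1) :=
    ⟨by simp [Measure.smul_apply]⟩
  haveI : IsFiniteMeasure (ENNReal.ofReal (1 - lam) • P0) :=
    ⟨by simp [Measure.smul_apply]⟩
  haveI : IsFiniteMeasure M := by rw [hM, mix]; infer_instance
  haveI : IsFiniteMeasure ν := by rw [hν]; infer_instance
  have hadd : M.rnDeriv ν =ᵐ[ν]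
      (ENNReal.ofReal lam • P1).rnDeriv ν + (ENNReal.ofReal (1 - lam) • P0).rnDeriv ν := by
    rw [hM, mix]; exact Measure.rnDeriv_add' _ _ _
  have hs1 : (ENNReal.ofReal lam • P1).rnDeriv ν =ᵐ[ν] ENNReal.ofReal lam • P1.rnDeriv ν :=
    Measure.rnDeriv_smul_left_of_ne_top' _ _ ENNReal.ofReal_ne_top
  have hs0 : (ENNReal.ofReal (1 - lam) • P0).rnDeriv ν
      =ᵐ[ν] ENNReal.ofReal (1 - lam) • P0.rnDeriv ν :=
    Measure.rnDeriv_smul_left_of_ne_top' _ _ ENNReal.ofReal_ne_top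
  have hlt1 : ∀ᵐ ω ∂ν, P1.rnDeriv ν ω < ∞ := Measure.rnDeriv_lt_top _ _
  have hlt0 : ∀ᵐ ω ∂ν, P0.rnDeriv ν ω < ∞ := Measure.rnDeriv_lt_top _ _
  have hint1 : Integrable (fun ω => (P1.rnDeriv ν ω).toReal) ν :=
    Measure.integrable_toReal_rnDeriv
  have hint0 : Integrable (fun ω => (P0.rnDeriv ν ω).toReal) ν :=
    Measure.integrable_toReal_rnDeriv
  have hintg : Integrable
      (fun ω => lam * ((P1.rnDeriv ν ω).toReal + (P0.rnDeriv ν ω).toReal)) ν :=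
    (hint1.add hint0).const_mul lam
  have hbound : ∀ᵐ ω ∂ν,
      (Real.sqrt ((M.rnDeriv ν ω).toReal) - Real.sqrt ((P0.rnDeriv ν ω).toReal)) ^ 2
        ≤ lam * ((P1.rnDeriv ν ω).toReal + (P0.rnDeriv ν ω).toReal) := by
    filter_upwards [hadd, hs1, hs0, hlt1, hlt0] with ω h1 h2 h3 h4 h5
    have hMval : (M.rnDeriv ν ω).toReal
        = lam * (P1.rnDeriv ν ω).toReal + (1 - lam) * (P0.rnDeriv ν ω).toReal := by
      rw [h1, Pi.add_apply, h2, h3, Pi.smul_apply, Pi.smul_apply, smul_eq_mul, smul_eq_mul,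
        ENNReal.toReal_add, ENNReal.toReal_mul, ENNReal.toReal_mul,
        ENNReal.toReal_ofReal hl, ENNReal.toReal_ofReal (by linarith)]
      · exact ENNReal.mul_ne_top ENNReal.ofReal_ne_top h4.ne
      · exact ENNReal.mul_ne_top ENNReal.ofReal_ne_top h5.ne
    calc (Real.sqrt ((M.rnDeriv ν ω).toReal) - Real.sqrt ((P0.rnDeriv ν ω).toReal)) ^ 2
        ≤ |(M.rnDeriv ν ω).toReal - (P0.rnDeriv ν ω).toReal| :=
          sqrt_sub_sq_le_abs ENNReal.toReal_nonneg ENNReal.toReal_nonneg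
      _ ≤ lam * ((P1.rnDeriv ν ω).toReal + (P0.rnDeriv ν ω).toReal) := by
          rw [hMval]
          have e : lam * (P1.rnDeriv ν ω).toReal + (1 - lam) * (P0.rnDeriv ν ω).toReal
              - (P0.rnDeriv ν ω).toReal
              = lam * ((P1.rnDeriv ν ω).toReal - (P0.rnDeriv ν ω).toReal) := by ring
          rw [e, abs_mul, abs_of_nonneg hl]
          apply mul_le_mul_of_nonneg_left _ hl
          have := ENNReal.toReal_nonneg (a := P1.rnDeriv ν ω)
          have := ENNReal.toReal_nonneg (a := P0.rnDeriv ν ω)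
          rw [abs_sub_le_iff]; constructor <;> linarith
  have hInt : (∫ ω, (Real.sqrt ((M.rnDeriv ν ω).toReal)
      - Real.sqrt ((P0.rnDeriv ν ω).toReal)) ^ 2 ∂ν) ≤ 2 * lam := by
    have h1 : (∫ ω, (Real.sqrt ((M.rnDeriv ν ω).toReal)
        - Real.sqrt ((P0.rnDeriv ν ω).toReal)) ^ 2 ∂ν)
        ≤ ∫ ω, lam * ((P1.rnDeriv ν ω).toReal + (P0.rnDeriv ν ω).toReal) ∂ν := by
      apply integral_mono_of_nonneg _ hintg hbound
      filter_upwards with ω using sq_nonneg _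
    have h2 : (∫ ω, lam * ((P1.rnDeriv ν ω).toReal + (P0.rnDeriv ν ω).toReal) ∂ν)
        ≤ 2 * lam := by
      rw [integral_const_mul, integral_add hint1 hint0]
      have i1 : (∫ ω, (P1.rnDeriv ν ω).toReal ∂ν) ≤ 1 := by
        rw [integral_toReal (Measure.measurable_rnDeriv _ _).aemeasurable hlt1]
        apply ENNReal.toReal_le_of_le_ofReal one_pos.le
        calc ∫⁻ ω, P1.rnDeriv ν ω ∂ν ≤ P1 Set.univ := Measure.lintegral_rnDeriv_le
          _ = 1 := measure_univ
          _ = ENNReal.ofReal 1 := by simp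
      have i0 : (∫ ω, (P0.rnDeriv ν ω).toReal ∂ν) ≤ 1 := by
        rw [integral_toReal (Measure.measurable_rnDeriv _ _).aemeasurable hlt0]
        apply ENNReal.toReal_le_of_le_ofReal one_pos.le
        calc ∫⁻ ω, P0.rnDeriv ν ω ∂ν ≤ P0 Set.univ := Measure.lintegral_rnDeriv_le
          _ = 1 := measure_univ
          _ = ENNReal.ofReal 1 := by simp
      have hi1 : 0 ≤ ∫ ω, (P1.rnDeriv ν ω).toReal ∂ν :=
        integral_nonneg fun _ => ENNReal.toReal_nonneg
      nlinarith
    linarith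
  rw [dH]
  exact Real.sqrt_le_sqrt hInt

lemma le_modulus_aux {d : Measure X → Measure X → ℝ} {P : Set (Measure X)}
    {θ : Measure X → ℝ} {ε : ℝ} {A B : Measure X} (hA : A ∈ P) (hB : B ∈ P)
    (hd : d A B ≤ ε) : ENNReal.ofReal |θ A - θ B| ≤ modulus d P θ ε := by
  unfold modulus
  exact le_iSup₂_of_le A hA (le_iSup₂_of_le B hB (le_iSup_of_le hd le_rfl))

/-- Lemma: lower bounds on the moduli for linear non-constant functionals.
If `𝒫` is a nonempty convex set of probability measures and `θ : 𝒫 → ℝ` is linear and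
non-constant, then there exist `c0, c1 > 0` with `ω_TV(ε) ≥ c0 ε` and
`ω_H(ε) ≥ (c0/2) ε²` for all `ε ∈ [0, c1]`. -/
theorem statement14 {Ω : Type*} [MeasurableSpace Ω] (P : Set (Measure Ω)) (hne : P.Nonempty)
    (hP : ∀ μ ∈ P, IsProbabilityMeasure μ) (hconv : ConvexMeasureSet P)
    (θ : Measure Ω → ℝ) (hlin : LinearFunctional P θ)
    (hnc : ∃ P0 ∈ P, ∃ P1 ∈ P, θ P0 ≠ θ P1) :
    ∃ c0 c1 : ℝ, 0 < c0 ∧ 0 < c1 ∧ ∀ ε : ℝ, 0 ≤ ε → ε ≤ c1 →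
      ENNReal.ofReal (c0 * ε) ≤ omegaTV P θ ε ∧
        ENNReal.ofReal (c0 / 2 * ε ^ 2) ≤ omegaH P θ ε := by
  obtain ⟨Q0, hQ0, Q1, hQ1, hne'⟩ := hnc
  haveI := hP Q0 hQ0
  haveI := hP Q1 hQ1
  set c0 : ℝ := |θ Q1 - θ Q0| with hc0
  have hc0pos : 0 < c0 := abs_pos.mpr (sub_ne_zero.mpr (Ne.symm hne'))
  refine ⟨c0, 1, hc0pos, one_pos, fun ε hε0 hε1 => ?_⟩
  constructor
  · -- TV part, lam = ε
    have hmem : mix ε Q1 Q0 ∈ P := hconv Q1 hQ1 Q0 hQ0 ε hε0 hε1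
    have hθ : θ (mix ε Q1 Q0) = ε * θ Q1 + (1 - ε) * θ Q0 :=
      hlin Q1 hQ1 Q0 hQ0 ε hε0 hε1
    have hdist : dTV (mix ε Q1 Q0) Q0 ≤ ε := dTV_mix_le hε0 hε1 Q0 Q1
    have habs : |θ (mix ε Q1 Q0) - θ Q0| = c0 * ε := by
      rw [hθ]
      have : ε * θ Q1 + (1 - ε) * θ Q0 - θ Q0 = ε * (θ Q1 - θ Q0) := by ring
      rw [this, abs_mul, abs_of_nonneg hε0, hc0, mul_comm]
    calc ENNReal.ofReal (c0 * ε) = ENNReal.ofReal |θ (mix ε Q1 Q0) - θ Q0| := by rw [habs]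
      _ ≤ omegaTV P θ ε := le_modulus_aux hmem hQ0 hdist
  · -- Hellinger part, lam = ε^2/2
    set lam : ℝ := ε ^ 2 / 2 with hlam
    have hl : 0 ≤ lam := by positivity
    have hl1 : lam ≤ 1 := by nlinarith
    have hmem : mix lam Q1 Q0 ∈ P := hconv Q1 hQ1 Q0 hQ0 lam hl hl1
    have hθ : θ (mix lam Q1 Q0) = lam * θ Q1 + (1 - lam) * θ Q0 :=
      hlin Q1 hQ1 Q0 hQ0 lam hl hl1
    have hdist : dH (mix lam Q1 Q0) Q0 ≤ ε := by
      have h := dH_mix_le hl hl1 Q0 Q1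
      have he : 2 * lam = ε ^ 2 := by rw [hlam]; ring
      rwa [he, Real.sqrt_sq hε0] at h
    have habs : |θ (mix lam Q1 Q0) - θ Q0| = c0 / 2 * ε ^ 2 := by
      rw [hθ]
      have : lam * θ Q1 + (1 - lam) * θ Q0 - θ Q0 = lam * (θ Q1 - θ Q0) := by ring
      rw [this, abs_mul, abs_of_nonneg hl, hc0, hlam]; ring
    calc ENNReal.ofReal (c0 / 2 * ε ^ 2)
        = ENNReal.ofReal |θ (mix lam Q1 Q0) - θ Q0| := by rw [habs]
      _ ≤ omegaH P θ ε := le_modulus_aux hmem hQ0 hdist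


end PrivacyPaper
end

section
/- Let P0 and P1 be sets of probability measures on a measurable space (Ω, 𝒜), both dominated by a σ-finite measure μ. Then there exists a measurable φ* : Ω → [0,1] such that sup_{P0∈P0, P1∈P1} ( ∫ φ* dP0 + ∫ (1−φ*) dP1 ) = inf over all measurable φ : Ω → [0,1] of sup_{P0∈P0, P1∈P1} ( ∫ φ dP0 + ∫ (1−φ) dP1 ); that is, a minimax test exists. -/
open MeasureTheory ProbabilityTheory ENNReal

namespace PrivacyPaper

variable {X Z Ω : Type*} [MeasurableSpace X] [MeasurableSpace Z] [MeasurableSpace Ω]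

section KraftWitting

open Filter Topology

variable {Ω' : Type*} [MeasurableSpace Ω']

/-- The EReal supremum of a monotone real sequence converging to `L` is `L`. -/
lemma KW_iSup_coe {c : ℕ → ℝ} {L : ℝ} (hm : Monotone c)
    (ht : Filter.Tendsto c Filter.atTop (nhds L)) :
    (⨆ n, ((c n : ℝ) : EReal)) = (L : EReal) := by
  refine le_antisymm (iSup_le fun n => EReal.coe_le_coe_iff.2 (hm.ge_of_tendsto ht n)) ?_
  rw [le_iSup_iff]
  intro b hb
  induction b using EReal.rec with
  | bot => exact absurd (hb 0) (by simp)
  | coe r =>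
    exact EReal.coe_le_coe_iff.2 (le_of_tendsto ht (Filter.Eventually.of_forall fun n =>
      EReal.coe_le_coe_iff.1 (hb n)))
  | top => exact le_top

/-- A lower semicontinuous `EReal`-valued function attains its minimum on a nonempty
compact set. -/
lemma KW_exists_min_lsc {X : Type*} [TopologicalSpace X] {f : X → EReal}
    (hf : LowerSemicontinuous f) {s : Set X} (hs : IsCompact s) (hne : s.Nonempty) :
    ∃ x ∈ s, ∀ y ∈ s, f x ≤ f y := by
  obtain ⟨x0, hx0⟩ := hne
  have h := hs.inter_iInter_nonempty (ι := s) (fun y => {x | f x ≤ f y.1})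
    (fun y => hf.isClosed_preimage _) ?_
  · obtain ⟨x, hxs, hx⟩ := h
    simp only [Set.mem_iInter, Set.mem_setOf_eq] at hx
    exact ⟨x, hxs, fun y hy => hx ⟨y, hy⟩⟩
  · intro u
    rcases u.eq_empty_or_nonempty with hu | hu
    · simp only [hu]
      simpa using ⟨x0, hx0⟩
    · obtain ⟨i0, hi0, hmin⟩ := u.exists_min_image (fun y : s => f y.1) hu
      refine ⟨i0.1, i0.2, ?_⟩
      simp only [Set.mem_iInter, Set.mem_setOf_eq]
      exact fun i hi => hmin i hi

/-- Truncated Radon–Nikodym density. -/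
noncomputable def KWgtr (μ' ν : Measure Ω') (n : ℕ) : Ω' → ℝ :=
  fun ω => min ((ν.rnDeriv μ' ω).toReal) n

lemma KWgtr_meas (μ' ν : Measure Ω') (n : ℕ) : Measurable (KWgtr μ' ν n) :=
  ((Measure.measurable_rnDeriv ν μ').ennreal_toReal).min measurable_const

lemma KWgtr_nonneg (μ' ν : Measure Ω') (n : ℕ) (ω : Ω') : 0 ≤ KWgtr μ' ν n ω :=
  le_min ENNReal.toReal_nonneg (Nat.cast_nonneg n)

lemma KWgtr_le (μ' ν : Measure Ω') (n : ℕ) (ω : Ω') :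
    KWgtr μ' ν n ω ≤ (ν.rnDeriv μ' ω).toReal := min_le_left _ _

lemma KWgtr_mono (μ' ν : Measure Ω') (ω : Ω') : Monotone fun n => KWgtr μ' ν n ω :=
  fun a b hab => min_le_min le_rfl (Nat.cast_le.2 hab)

lemma KWgtr_tendsto (μ' ν : Measure Ω') (ω : Ω') :
    Filter.Tendsto (fun n => KWgtr μ' ν n ω) Filter.atTop
      (nhds ((ν.rnDeriv μ' ω).toReal)) := by
  apply tendsto_atTop_of_eventually_const (i₀ := ⌈(ν.rnDeriv μ' ω).toReal⌉₊)
  intro n hn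
  exact min_eq_left (le_trans (Nat.le_ceil _) (Nat.cast_le.2 hn))

lemma KWgtr_memℒp (μ' ν : Measure Ω') [IsFiniteMeasure μ'] (n : ℕ) :
    MemLp (KWgtr μ' ν n) 2 μ' :=
  MemLp.of_bound (KWgtr_meas μ' ν n).aestronglyMeasurable n <| Filter.Eventually.of_forall
    fun ω => by
      rw [Real.norm_eq_abs, abs_of_nonneg (KWgtr_nonneg μ' ν n ω)]
      exact min_le_right _ _

/-- Truncated density as an `L²` element. -/
noncomputable def KWT2 (μ' ν : Measure Ω') [IsFiniteMeasure μ'] (n : ℕ) :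
    MeasureTheory.Lp ℝ 2 μ' :=
  (KWgtr_memℒp μ' ν n).toLp _

lemma KW_inner_T2 (μ' ν : Measure Ω') [IsFiniteMeasure μ'] (n : ℕ)
    (f : MeasureTheory.Lp ℝ 2 μ') :
    (inner ℝ f (KWT2 μ' ν n) : ℝ) = ∫ ω, f ω * KWgtr μ' ν n ω ∂μ' := by
  rw [MeasureTheory.L2.inner_def]
  refine integral_congr_ae ?_
  have hcoe : (KWT2 μ' ν n : Ω' → ℝ) =ᵐ[μ'] KWgtr μ' ν n := MemLp.coeFn_toLp _
  filter_upwards [hcoe] with ω hω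
  rw [RCLike.inner_apply, starRingEnd_apply, star_trivial, hω, mul_comm]

lemma KW_int_mul_gtr (μ' ν ν' : Measure Ω') [IsFiniteMeasure μ'] [IsFiniteMeasure ν']
    (n : ℕ) {f : Ω' → ℝ} (hfm : MeasureTheory.AEStronglyMeasurable f μ')
    (hb : ∀ᵐ ω ∂μ', |f ω| ≤ 1) :
    Integrable (fun ω => f ω * KWgtr μ' ν' n ω) μ' := by
  refine (Measure.integrable_toReal_rnDeriv (μ := ν') (ν := μ')).mono
    (hfm.mul (KWgtr_meas μ' ν' n).aestronglyMeasurable) ?_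
  filter_upwards [hb] with ω h
  simp only [norm_mul, Real.norm_eq_abs]
  rw [abs_of_nonneg (KWgtr_nonneg μ' ν' n ω), abs_of_nonneg (ENNReal.toReal_nonneg)]
  exact le_trans (mul_le_of_le_one_left (KWgtr_nonneg μ' ν' n ω) h) (KWgtr_le μ' ν' n ω)

lemma KW_int_mul_g (μ' ν' : Measure Ω') [IsFiniteMeasure μ'] [IsFiniteMeasure ν']
    {f : Ω' → ℝ} (hfm : MeasureTheory.AEStronglyMeasurable f μ')
    (hb : ∀ᵐ ω ∂μ', |f ω| ≤ 1) :
    Integrable (fun ω => f ω * (ν'.rnDeriv μ' ω).toReal) μ' := by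
  refine (Measure.integrable_toReal_rnDeriv (μ := ν') (ν := μ')).mono
    (hfm.mul (Measure.measurable_rnDeriv ν' μ').ennreal_toReal.aestronglyMeasurable) ?_
  filter_upwards [hb] with ω h
  simp only [norm_mul, Real.norm_eq_abs]
  exact mul_le_of_le_one_left (abs_nonneg _) h

/-- Key representation: the truncated risks increase to the true risk. -/
lemma KW_risk_rep (μ' ν0 ν1 : Measure Ω') [IsFiniteMeasure μ'] [IsFiniteMeasure ν0]
    [IsFiniteMeasure ν1] (h0 : ν0 ≪ μ') (h1 : ν1 ≪ μ') (f : Ω' → ℝ)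
    (hfm : MeasureTheory.AEStronglyMeasurable f μ')
    (h01 : ∀ᵐ ω ∂μ', 0 ≤ f ω ∧ f ω ≤ 1) :
    (⨆ n : ℕ, ((((∫ ω, f ω * KWgtr μ' ν0 n ω ∂μ') +
        ((∫ ω, KWgtr μ' ν1 n ω ∂μ') - ∫ ω, f ω * KWgtr μ' ν1 n ω ∂μ')) : ℝ) : EReal))
      = (((∫ ω, f ω ∂ν0) + ∫ ω, (1 - f ω) ∂ν1 : ℝ) : EReal) := by
  have hfb : ∀ᵐ ω ∂μ', |f ω| ≤ 1 := by
    filter_upwards [h01] with ω h; rw [abs_le]; exact ⟨le_trans (by norm_num) h.1, h.2⟩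
  have h1fm : MeasureTheory.AEStronglyMeasurable (fun ω => 1 - f ω) μ' :=
    MeasureTheory.aestronglyMeasurable_const.sub hfm
  have h1fb : ∀ᵐ ω ∂μ', |1 - f ω| ≤ 1 := by
    filter_upwards [h01] with ω h; rw [abs_le]; constructor <;> linarith [h.1, h.2]
  -- integrability of truncated pieces
  have hi0 : ∀ n : ℕ, Integrable (fun ω => f ω * KWgtr μ' ν0 n ω) μ' :=
    fun n => KW_int_mul_gtr μ' ν0 ν0 n hfm hfb
  have hi1 : ∀ n : ℕ, Integrable (fun ω => f ω * KWgtr μ' ν1 n ω) μ' :=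
    fun n => KW_int_mul_gtr μ' ν1 ν1 n hfm hfb
  have hi1' : ∀ n : ℕ, Integrable (fun ω => (1 - f ω) * KWgtr μ' ν1 n ω) μ' :=
    fun n => KW_int_mul_gtr μ' ν1 ν1 n h1fm h1fb
  have higtr1 : ∀ n : ℕ, Integrable (fun ω => KWgtr μ' ν1 n ω) μ' :=
    fun n => (KWgtr_memℒp μ' ν1 n).integrable one_le_two
  -- the combined sequence
  set c : ℕ → ℝ := fun n => (∫ ω, f ω * KWgtr μ' ν0 n ω ∂μ') +
      ((∫ ω, KWgtr μ' ν1 n ω ∂μ') - ∫ ω, f ω * KWgtr μ' ν1 n ω ∂μ') with hc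
  have hc_eq : ∀ n, c n = ∫ ω, (f ω * KWgtr μ' ν0 n ω + (1 - f ω) * KWgtr μ' ν1 n ω) ∂μ' := by
    intro n
    rw [integral_add (hi0 n) (hi1' n)]
    congr 1
    have : ∀ ω, (1 - f ω) * KWgtr μ' ν1 n ω = KWgtr μ' ν1 n ω - f ω * KWgtr μ' ν1 n ω := by
      intro ω; ring
    simp_rw [this]
    rw [integral_sub (higtr1 n) (hi1 n)]
  have hcomb_int : ∀ n, Integrable
      (fun ω => f ω * KWgtr μ' ν0 n ω + (1 - f ω) * KWgtr μ' ν1 n ω) μ' :=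
    fun n => (hi0 n).add (hi1' n)
  -- limit function
  have hF0 : Integrable (fun ω => f ω * (ν0.rnDeriv μ' ω).toReal) μ' :=
    KW_int_mul_g μ' ν0 hfm hfb
  have hF1 : Integrable (fun ω => (1 - f ω) * (ν1.rnDeriv μ' ω).toReal) μ' :=
    KW_int_mul_g μ' ν1 h1fm h1fb
  have hF : Integrable (fun ω => f ω * (ν0.rnDeriv μ' ω).toReal +
      (1 - f ω) * (ν1.rnDeriv μ' ω).toReal) μ' := hF0.add hF1
  have hmonoae : ∀ᵐ ω ∂μ', Monotone fun n =>
      f ω * KWgtr μ' ν0 n ω + (1 - f ω) * KWgtr μ' ν1 n ω := by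
    filter_upwards [h01] with ω h a b hab
    have h1 := KWgtr_mono μ' ν0 ω hab
    have h2 := KWgtr_mono μ' ν1 ω hab
    exact add_le_add (mul_le_mul_of_nonneg_left h1 h.1)
      (mul_le_mul_of_nonneg_left h2 (by linarith [h.2]))
  have htendae : ∀ᵐ ω ∂μ', Filter.Tendsto
      (fun n => f ω * KWgtr μ' ν0 n ω + (1 - f ω) * KWgtr μ' ν1 n ω) Filter.atTop
      (nhds (f ω * (ν0.rnDeriv μ' ω).toReal + (1 - f ω) * (ν1.rnDeriv μ' ω).toReal)) :=
    Filter.Eventually.of_forall fun ω =>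
      (((KWgtr_tendsto μ' ν0 ω).const_mul (f ω)).add
        ((KWgtr_tendsto μ' ν1 ω).const_mul (1 - f ω)))
  have htint := MeasureTheory.integral_tendsto_of_tendsto_of_monotone hcomb_int hF hmonoae htendae
  have htend : Filter.Tendsto c Filter.atTop
      (nhds (∫ ω, (f ω * (ν0.rnDeriv μ' ω).toReal +
        (1 - f ω) * (ν1.rnDeriv μ' ω).toReal) ∂μ')) := by
    refine htint.congr fun n => (hc_eq n).symm
  have hmono : Monotone c := by
    intro a b hab
    rw [hc_eq a, hc_eq b]
    refine integral_mono_ae (hcomb_int a) (hcomb_int b) ?_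
    filter_upwards [hmonoae] with ω h
    exact h hab
  have hval : (∫ ω, (f ω * (ν0.rnDeriv μ' ω).toReal +
      (1 - f ω) * (ν1.rnDeriv μ' ω).toReal) ∂μ') = (∫ ω, f ω ∂ν0) + ∫ ω, (1 - f ω) ∂ν1 := by
    rw [integral_add hF0 hF1]
    congr 1
    · rw [← integral_rnDeriv_smul h0 (f := f)]
      refine integral_congr_ae (Filter.Eventually.of_forall fun ω => ?_)
      simp [mul_comm]
    · rw [← integral_rnDeriv_smul h1 (f := fun ω => 1 - f ω)]
      refine integral_congr_ae (Filter.Eventually.of_forall fun ω => ?_)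
      simp [mul_comm]
  rw [hval] at htend
  exact KW_iSup_coe hmono htend

end KraftWitting
section KWCore

open Filter Topology NormedSpace

variable {Ω' : Type*} [MeasurableSpace Ω']

theorem KW_minimax_core (P0 P1 : Set (Measure Ω'))
    (hprob : ∀ ν ∈ P0 ∪ P1, IsProbabilityMeasure ν)
    (μ' : Measure Ω') [IsProbabilityMeasure μ'] (hdom : ∀ ν ∈ P0 ∪ P1, ν ≪ μ') :
    ∃ φs : Ω' → ℝ, IsTest φs ∧
      (⨆ (ν0 : Measure Ω') (_ : ν0 ∈ P0) (ν1 : Measure Ω') (_ : ν1 ∈ P1),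
          ((testRisk ν0 ν1 φs : ℝ) : EReal)) =
        ⨅ (φ : Ω' → ℝ) (_ : IsTest φ),
          ⨆ (ν0 : Measure Ω') (_ : ν0 ∈ P0) (ν1 : Measure Ω') (_ : ν1 ∈ P1),
            ((testRisk ν0 ν1 φ : ℝ) : EReal) := by
  classical
  -- Riesz representation of weak-star dual elements
  let rep : WeakDual ℝ (Lp ℝ 2 μ') → Lp ℝ 2 μ' := fun ψ =>
    (InnerProductSpace.toDual ℝ (Lp ℝ 2 μ')).symm (WeakDual.toStrongDual ψ)
  have hrepd : ∀ ψ : WeakDual ℝ (Lp ℝ 2 μ'),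
      (InnerProductSpace.toDual ℝ (Lp ℝ 2 μ')) (rep ψ) = WeakDual.toStrongDual ψ := fun ψ =>
    (InnerProductSpace.toDual ℝ (Lp ℝ 2 μ')).apply_symm_apply _
  have hrep : ∀ (ψ : WeakDual ℝ (Lp ℝ 2 μ')) (x : Lp ℝ 2 μ'),
      ψ x = (inner ℝ (rep ψ) x : ℝ) := by
    intro ψ x
    have h2 := congrArg (fun d : StrongDual ℝ (Lp ℝ 2 μ') => d x) (hrepd ψ)
    simp only [InnerProductSpace.toDual_apply_apply, WeakDual.toStrongDual_apply] at h2
    exact h2.symm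
  -- indicator functions in L²
  let ind : ∀ (A : Set Ω'), MeasurableSet A → Lp ℝ 2 μ' := fun A hA =>
    indicatorConstLp 2 hA (measure_ne_top μ' A) (1 : ℝ)
  have h_ind : ∀ (ψ : WeakDual ℝ (Lp ℝ 2 μ')) (A : Set Ω') (hA : MeasurableSet A),
      ψ (ind A hA) = ∫ ω in A, (rep ψ) ω ∂μ' := by
    intro ψ A hA
    rw [hrep ψ, real_inner_comm]
    exact L2.inner_indicatorConstLp_one (𝕜 := ℝ) hA (measure_ne_top μ' A) (rep ψ)
  -- the feasible set
  set T : Set (WeakDual ℝ (Lp ℝ 2 μ')) :=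
    {ψ | ∀ (A : Set Ω') (hA : MeasurableSet A),
      0 ≤ ψ (ind A hA) ∧ ψ (ind A hA) ≤ (μ' A).toReal} with hT
  have hT0 : (0 : WeakDual ℝ (Lp ℝ 2 μ')) ∈ T := by
    intro A hA
    have hz : (0 : WeakDual ℝ (Lp ℝ 2 μ')) (ind A hA) = 0 := rfl
    rw [hz]
    exact ⟨le_rfl, ENNReal.toReal_nonneg⟩
  -- members of T have a.e.-[0,1]-valued representatives
  have hT01 : ∀ ψ ∈ T, ∀ᵐ ω ∂μ', 0 ≤ (rep ψ) ω ∧ (rep ψ) ω ≤ 1 := by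
    intro ψ hψ
    have hint : Integrable (rep ψ : Ω' → ℝ) μ' := (Lp.memLp (rep ψ)).integrable one_le_two
    have hnn : 0 ≤ᵐ[μ'] (rep ψ : Ω' → ℝ) := by
      refine ae_nonneg_of_forall_setIntegral_nonneg hint fun s hs _ => ?_
      rw [← h_ind ψ s hs]; exact (hψ s hs).1
    have hle : ∀ᵐ ω ∂μ', (rep ψ) ω ≤ 1 := by
      have hnn2 : 0 ≤ᵐ[μ'] (fun ω => 1 - (rep ψ) ω) := by
        refine ae_nonneg_of_forall_setIntegral_nonneg
          ((integrable_const (1 : ℝ)).sub hint) fun s hs _ => ?_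
        rw [integral_sub (integrable_const (1 : ℝ)).integrableOn hint.integrableOn,
          setIntegral_const, smul_eq_mul, mul_one, sub_nonneg, ← h_ind ψ s hs]
        exact (hψ s hs).2
      filter_upwards [hnn2] with ω h
      simpa [sub_nonneg] using h
    filter_upwards [hnn, hle] with ω h1 h2 using ⟨h1, h2⟩
  -- T is compact
  have hTclosed : IsClosed T := by
    have : T = ⋂ (A : Set Ω'), ⋂ (hA : MeasurableSet A),
        ({ψ : WeakDual ℝ (Lp ℝ 2 μ') | 0 ≤ ψ (ind A hA)} ∩
         {ψ : WeakDual ℝ (Lp ℝ 2 μ') | ψ (ind A hA) ≤ (μ' A).toReal}) := by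
      ext ψ
      constructor
      · intro h
        exact Set.mem_iInter.2 fun A => Set.mem_iInter.2 fun hA => ⟨(h A hA).1, (h A hA).2⟩
      · intro h A hA
        have h2 := Set.mem_iInter.1 (Set.mem_iInter.1 h A) hA
        exact ⟨h2.1, h2.2⟩
    rw [this]
    refine isClosed_iInter fun A => isClosed_iInter fun hA => IsClosed.inter ?_ ?_
    · exact isClosed_le continuous_const (WeakDual.eval_continuous _)
    · exact isClosed_le (WeakDual.eval_continuous _) continuous_const
  have hTball : T ⊆ WeakDual.toStrongDual ⁻¹' Metric.closedBall 0 1 := by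
    intro ψ hψ
    simp only [Set.mem_preimage, Metric.mem_closedBall, dist_zero_right]
    rw [← hrepd ψ, LinearIsometryEquiv.norm_map]
    have hb : ∀ᵐ ω ∂μ', ‖(rep ψ) ω‖ ≤ 1 := by
      filter_upwards [hT01 ψ hψ] with ω h
      rw [Real.norm_eq_abs, abs_of_nonneg h.1]; exact h.2
    refine le_trans (Lp.norm_le_of_ae_bound zero_le_one hb) ?_
    have : measureUnivNNReal μ' = 1 := by
      simp [measureUnivNNReal, measure_univ]
    rw [this]
    simp
  have hTcompact : IsCompact T :=
    (WeakDual.isCompact_closedBall (𝕜 := ℝ) (E := Lp ℝ 2 μ') 0 1).of_isClosed_subset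
      hTclosed hTball
  -- the objective functional
  set Φ : WeakDual ℝ (Lp ℝ 2 μ') → EReal := fun ψ =>
    ⨆ (ν0 : Measure Ω') (_ : ν0 ∈ P0) (ν1 : Measure Ω') (_ : ν1 ∈ P1) (n : ℕ),
      (((ψ (KWT2 μ' ν0 n) + ((∫ ω, KWgtr μ' ν1 n ω ∂μ') - ψ (KWT2 μ' ν1 n))) : ℝ) : EReal)
    with hΦ
  have hΦlsc : LowerSemicontinuous Φ := by
    refine lowerSemicontinuous_iSup fun ν0 => lowerSemicontinuous_iSup fun _ =>
      lowerSemicontinuous_iSup fun ν1 => lowerSemicontinuous_iSup fun _ =>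
      lowerSemicontinuous_iSup fun n => Continuous.lowerSemicontinuous ?_
    exact continuous_coe_real_ereal.comp
      ((WeakDual.eval_continuous (KWT2 μ' ν0 n)).add
        (continuous_const.sub (WeakDual.eval_continuous (KWT2 μ' ν1 n))))
  -- identification of the objective with the sup-risk
  have hpair : ∀ (ψ : WeakDual ℝ (Lp ℝ 2 μ')) (f : Ω' → ℝ),
      AEStronglyMeasurable f μ' → (∀ᵐ ω ∂μ', 0 ≤ f ω ∧ f ω ≤ 1) →
      (f =ᵐ[μ'] (rep ψ : Ω' → ℝ)) →
      Φ ψ = ⨆ (ν0 : Measure Ω') (_ : ν0 ∈ P0) (ν1 : Measure Ω') (_ : ν1 ∈ P1),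
        ((testRisk ν0 ν1 f : ℝ) : EReal) := by
    intro ψ f hfm hf01 hfae
    rw [hΦ]
    refine iSup_congr fun ν0 => iSup_congr fun hν0 => iSup_congr fun ν1 =>
      iSup_congr fun hν1 => ?_
    haveI := hprob ν0 (Or.inl hν0)
    haveI := hprob ν1 (Or.inr hν1)
    have hψT2 : ∀ (ν : Measure Ω') (n : ℕ),
        ψ (KWT2 μ' ν n) = ∫ ω, f ω * KWgtr μ' ν n ω ∂μ' := by
      intro ν n
      rw [hrep ψ, KW_inner_T2]
      refine integral_congr_ae ?_
      filter_upwards [hfae] with ω h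
      rw [h]
    simp_rw [hψT2]
    rw [show (testRisk ν0 ν1 f : ℝ) = (∫ ω, f ω ∂ν0) + ∫ ω, (1 - f ω) ∂ν1 from rfl]
    exact KW_risk_rep μ' ν0 ν1 (hdom _ (Or.inl hν0)) (hdom _ (Or.inr hν1)) f hfm hf01
  -- embed honest tests into T
  have htest : ∀ (φ : Ω' → ℝ), IsTest φ → ∃ ψ : WeakDual ℝ (Lp ℝ 2 μ'), ψ ∈ T ∧
      φ =ᵐ[μ'] (rep ψ : Ω' → ℝ) := by
    intro φ hφ
    have hb : ∀ᵐ ω ∂μ', ‖φ ω‖ ≤ 1 := Eventually.of_forall fun ω => by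
      rw [Real.norm_eq_abs, abs_of_nonneg (hφ.2 ω).1]; exact (hφ.2 ω).2
    have hmem : MemLp φ 2 μ' := MemLp.of_bound hφ.1.aestronglyMeasurable 1 hb
    refine ⟨StrongDual.toWeakDual ((InnerProductSpace.toDual ℝ (Lp ℝ 2 μ')) (hmem.toLp φ)), ?_, ?_⟩
    · intro A hA
      have hψeq : (StrongDual.toWeakDual ((InnerProductSpace.toDual ℝ (Lp ℝ 2 μ'))
          (hmem.toLp φ))) (ind A hA) = ∫ ω in A, φ ω ∂μ' := by
        have : (StrongDual.toWeakDual ((InnerProductSpace.toDual ℝ (Lp ℝ 2 μ'))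
            (hmem.toLp φ))) (ind A hA) = (inner ℝ (hmem.toLp φ) (ind A hA) : ℝ) := rfl
        rw [this, real_inner_comm,
          L2.inner_indicatorConstLp_one (𝕜 := ℝ) hA (measure_ne_top μ' A)]
        refine setIntegral_congr_ae hA ?_
        filter_upwards [hmem.coeFn_toLp] with ω h _
        exact h
      rw [hψeq]
      constructor
      · exact setIntegral_nonneg hA fun ω _ => (hφ.2 ω).1
      · calc (∫ ω in A, φ ω ∂μ') ≤ ∫ _ω in A, (1 : ℝ) ∂μ' := by
              refine setIntegral_mono_on (hmem.integrable one_le_two).integrableOn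
                (integrable_const (1 : ℝ)).integrableOn hA fun ω _ => (hφ.2 ω).2
          _ = (μ' A).toReal := by rw [setIntegral_const, smul_eq_mul, mul_one, measureReal_def]
    · have h1 : rep (StrongDual.toWeakDual ((InnerProductSpace.toDual ℝ (Lp ℝ 2 μ'))
          (hmem.toLp φ))) = hmem.toLp φ := by
        simp only [rep]
        rw [show WeakDual.toStrongDual (StrongDual.toWeakDual ((InnerProductSpace.toDual ℝ
          (Lp ℝ 2 μ')) (hmem.toLp φ))) = (InnerProductSpace.toDual ℝ (Lp ℝ 2 μ'))
          (hmem.toLp φ) from rfl]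
        exact (InnerProductSpace.toDual ℝ (Lp ℝ 2 μ')).symm_apply_apply _
      rw [h1]
      exact (hmem.coeFn_toLp).symm
  -- minimizer
  obtain ⟨ψs, hψsT, hψsmin⟩ := KW_exists_min_lsc hΦlsc hTcompact ⟨0, hT0⟩
  -- the minimax test
  set φs : Ω' → ℝ := fun ω => max 0 (min ((rep ψs : Ω' → ℝ) ω) 1) with hφs
  have hφs_meas : Measurable φs :=
    (measurable_const.max ((Lp.stronglyMeasurable (rep ψs)).measurable.min measurable_const))
  have hφs_test : IsTest φs := by
    refine ⟨hφs_meas, fun ω => ⟨le_max_left _ _, ?_⟩⟩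
    exact max_le zero_le_one (min_le_right _ _)
  have hφs_ae : φs =ᵐ[μ'] (rep ψs : Ω' → ℝ) := by
    filter_upwards [hT01 ψs hψsT] with ω h
    rw [hφs]
    simp only [min_eq_left h.2, max_eq_right h.1]
  have hφs01 : ∀ᵐ ω ∂μ', 0 ≤ φs ω ∧ φs ω ≤ 1 :=
    Eventually.of_forall fun ω => (hφs_test.2 ω)
  have hΦψs : Φ ψs = ⨆ (ν0 : Measure Ω') (_ : ν0 ∈ P0) (ν1 : Measure Ω') (_ : ν1 ∈ P1),
      ((testRisk ν0 ν1 φs : ℝ) : EReal) :=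
    hpair ψs φs hφs_meas.aestronglyMeasurable hφs01 hφs_ae
  refine ⟨φs, hφs_test, le_antisymm ?_ ?_⟩
  · refine le_iInf fun φ => le_iInf fun hφ => ?_
    obtain ⟨ψφ, hψφT, hψφae⟩ := htest φ hφ
    rw [← hΦψs, ← hpair ψφ φ hφ.1.aestronglyMeasurable
      (Eventually.of_forall fun ω => hφ.2 ω) hψφae]
    exact hψsmin ψφ hψφT
  · exact iInf₂_le φs hφs_test

end KWCore
/-- Lemma: existence of a minimax test, Krafft–Witting.
If `𝒫0` and `𝒫1` are sets of probability measures, both dominated by a σ-finite measure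
`μ`, then there exists a measurable `φ* : Ω → [0,1]` achieving
`inf_φ sup_{P0 ∈ 𝒫0, P1 ∈ 𝒫1} (∫ φ dP0 + ∫ (1-φ) dP1)`. -/
theorem statement15 {Ω : Type*} [MeasurableSpace Ω] (P0 P1 : Set (Measure Ω))
    (hprob : ∀ μ ∈ P0 ∪ P1, IsProbabilityMeasure μ)
    (μ : Measure Ω) (hσfin : SigmaFinite μ) (hdom : ∀ ν ∈ P0 ∪ P1, ν ≪ μ) :
    ∃ φs : Ω → ℝ, IsTest φs ∧
      (⨆ (ν0 : Measure Ω) (_ : ν0 ∈ P0) (ν1 : Measure Ω) (_ : ν1 ∈ P1),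
          ((testRisk ν0 ν1 φs : ℝ) : EReal)) =
        ⨅ (φ : Ω → ℝ) (_ : IsTest φ),
          ⨆ (ν0 : Measure Ω) (_ : ν0 ∈ P0) (ν1 : Measure Ω) (_ : ν1 ∈ P1),
            ((testRisk ν0 ν1 φ : ℝ) : EReal) := by
  classical
  have htest0 : IsTest (fun _ : Ω => (0 : ℝ)) :=
    ⟨measurable_const, fun ω => ⟨le_rfl, zero_le_one⟩⟩
  by_cases h0 : P0 = ∅
  · subst h0
    have hbot : ∀ φ : Ω → ℝ,
        (⨆ (ν0 : Measure Ω) (_ : ν0 ∈ (∅ : Set (Measure Ω))) (ν1 : Measure Ω)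
          (_ : ν1 ∈ P1), ((testRisk ν0 ν1 φ : ℝ) : EReal)) = ⊥ := by
      intro φ; simp
    refine ⟨fun _ => 0, htest0, ?_⟩
    rw [hbot]
    refine le_antisymm bot_le ?_
    calc (⨅ (φ : Ω → ℝ) (_ : IsTest φ), ⨆ (ν0 : Measure Ω) (_ : ν0 ∈ (∅ : Set (Measure Ω)))
          (ν1 : Measure Ω) (_ : ν1 ∈ P1), ((testRisk ν0 ν1 φ : ℝ) : EReal))
        ≤ ⨆ (ν0 : Measure Ω) (_ : ν0 ∈ (∅ : Set (Measure Ω))) (ν1 : Measure Ω)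
          (_ : ν1 ∈ P1), ((testRisk ν0 ν1 (fun _ => 0) : ℝ) : EReal) :=
          iInf₂_le (fun _ => 0) htest0
      _ = ⊥ := hbot _
  by_cases h1 : P1 = ∅
  · subst h1
    have hbot : ∀ φ : Ω → ℝ,
        (⨆ (ν0 : Measure Ω) (_ : ν0 ∈ P0) (ν1 : Measure Ω)
          (_ : ν1 ∈ (∅ : Set (Measure Ω))), ((testRisk ν0 ν1 φ : ℝ) : EReal)) = ⊥ := by
      intro φ; simp
    refine ⟨fun _ => 0, htest0, ?_⟩
    rw [hbot]
    refine le_antisymm bot_le ?_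
    calc (⨅ (φ : Ω → ℝ) (_ : IsTest φ), ⨆ (ν0 : Measure Ω) (_ : ν0 ∈ P0) (ν1 : Measure Ω)
          (_ : ν1 ∈ (∅ : Set (Measure Ω))), ((testRisk ν0 ν1 φ : ℝ) : EReal))
        ≤ ⨆ (ν0 : Measure Ω) (_ : ν0 ∈ P0) (ν1 : Measure Ω)
          (_ : ν1 ∈ (∅ : Set (Measure Ω))), ((testRisk ν0 ν1 (fun _ => 0) : ℝ) : EReal) :=
          iInf₂_le (fun _ => 0) htest0
      _ = ⊥ := hbot _
  -- both families nonempty: construct a dominating probability measure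
  obtain ⟨ν0', hν0'⟩ := Set.nonempty_iff_ne_empty.2 h0
  obtain ⟨μ'', hfin, hμμ'', _⟩ := MeasureTheory.exists_isFiniteMeasure_absolutelyContinuous μ
  haveI := hfin
  have hdom'' : ∀ ν ∈ P0 ∪ P1, ν ≪ μ'' := fun ν hν => (hdom ν hν).trans hμμ''
  have hne : μ'' Set.univ ≠ 0 := by
    intro h
    have hz : μ'' = 0 := Measure.measure_univ_eq_zero.1 h
    have hac := hdom'' ν0' (Or.inl hν0')
    rw [hz] at hac
    have hv0 : ν0' = 0 := Measure.absolutelyContinuous_zero_iff.1 hac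
    haveI := hprob ν0' (Or.inl hν0')
    have : (ν0' Set.univ) = 1 := measure_univ
    rw [hv0] at this
    simp at this
  set μ' : Measure Ω := (μ'' Set.univ)⁻¹ • μ'' with hμ'
  haveI : IsProbabilityMeasure μ' := by
    constructor
    rw [hμ']
    simp only [Measure.smul_apply, smul_eq_mul]
    exact ENNReal.inv_mul_cancel hne (measure_ne_top _ _)
  have hμ''μ' : μ'' ≪ μ' :=
    Measure.absolutelyContinuous_smul (by simp [hne, measure_ne_top μ'' Set.univ])
  have hdom' : ∀ ν ∈ P0 ∪ P1, ν ≪ μ' := fun ν hν => (hdom'' ν hν).trans hμ''μ'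
  exact KW_minimax_core P0 P1 hprob μ' hdom'

end PrivacyPaper
end

section
/- For s, t ∈ (0,1) with s ≠ t, define G(s,t) = log( (1−s)/(1−t) ) / log( (t/s)·(1−s)/(1−t) ), and set G(s,s) = s. Then G maps (0,1)² into (0,1), G is strictly increasing in each of its two arguments, and s < G(s,t) < t whenever 0 < s < t < 1. -/
open MeasureTheory ProbabilityTheory ENNReal

namespace PrivacyPaper

variable {X Z Ω : Type*} [MeasurableSpace X] [MeasurableSpace Z] [MeasurableSpace Ω]

lemma log_sub_lt {x y : ℝ} (hy : 0 < y) (h : y < x) :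
    Real.log x - Real.log y < (x - y) / y := by
  have hx : 0 < x := hy.trans h
  have h1 : Real.log (x / y) < x / y - 1 :=
    Real.log_lt_sub_one_of_pos (by positivity) (by
      intro hxy
      rw [div_eq_one_iff_eq hy.ne'] at hxy
      exact h.ne' hxy)
  rw [Real.log_div hx.ne' hy.ne'] at h1
  have : x / y - 1 = (x - y) / y := by field_simp
  linarith [this ▸ h1]

lemma lt_log_sub {x y : ℝ} (hy : 0 < y) (h : y < x) :
    (x - y) / x < Real.log x - Real.log y := by
  have hx : 0 < x := hy.trans h
  have h1 : Real.log (y / x) < y / x - 1 :=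
    Real.log_lt_sub_one_of_pos (by positivity) (by
      intro hxy
      rw [div_eq_one_iff_eq hx.ne'] at hxy
      exact h.ne hxy)
  rw [Real.log_div hy.ne' hx.ne'] at h1
  have : y / x - 1 = -((x - y) / x) := by field_simp; ring
  linarith [this ▸ h1]

lemma Gval {s t : ℝ} (hs : 0 < s) (hs1 : s < 1) (ht : 0 < t) (ht1 : t < 1) (hne : s ≠ t) :
    Gfun s t = (Real.log (1 - s) - Real.log (1 - t)) /
      ((Real.log t - Real.log s) + (Real.log (1 - s) - Real.log (1 - t))) := by
  rw [Gfun, if_neg hne,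
    Real.log_mul (by positivity) (by apply div_ne_zero <;> intro hh <;> nlinarith),
    Real.log_div (by linarith : (1:ℝ) - s ≠ 0) (by linarith : (1:ℝ) - t ≠ 0),
    Real.log_div ht.ne' hs.ne']


lemma ordered {s t : ℝ} (hs : 0 < s) (hst : s < t) (ht1 : t < 1) :
    s < Gfun s t ∧ Gfun s t < t := by
  have hs1 : s < 1 := hst.trans ht1
  have ht : 0 < t := hs.trans hst
  set a := Real.log t - Real.log s with hadef
  set b := Real.log (1 - s) - Real.log (1 - t) with hbdef
  have ha1 : (t - s) / t < a := lt_log_sub hs hst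
  have ha2 : a < (t - s) / s := log_sub_lt hs hst
  have hb1 : (t - s) / (1 - s) < b := by
    have := lt_log_sub (by linarith : (0:ℝ) < 1 - t) (by linarith : 1 - t < 1 - s)
    convert this using 2 <;> ring
  have hb2 : b < (t - s) / (1 - t) := by
    have := log_sub_lt (by linarith : (0:ℝ) < 1 - t) (by linarith : 1 - t < 1 - s)
    convert this using 2 <;> ring
  have ha : 0 < a := lt_trans (div_pos (by linarith) ht) ha1
  have hb : 0 < b := lt_trans (div_pos (by linarith) (by linarith)) hb1
  have hab : 0 < a + b := by linarith
  have h1 : a * s < t - s := (lt_div_iff₀ hs).mp ha2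
  have h2 : t - s < b * (1 - s) := (div_lt_iff₀ (by linarith)).mp hb1
  have h3 : b * (1 - t) < t - s := (lt_div_iff₀ (by linarith)).mp hb2
  have h4 : t - s < a * t := (div_lt_iff₀ ht).mp ha1
  rw [Gval hs hs1 ht ht1 hst.ne]
  constructor
  · rw [lt_div_iff₀ hab]; nlinarith
  · rw [div_lt_iff₀ hab]; nlinarith

lemma Gsymm {s t : ℝ} (hs : 0 < s) (hs1 : s < 1) (ht : 0 < t) (ht1 : t < 1) :
    Gfun s t = Gfun t s := by
  rcases eq_or_ne s t with h | h
  · rw [h]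
  · rw [Gval hs hs1 ht ht1 h, Gval ht ht1 hs hs1 (Ne.symm h),
      show Real.log (1 - t) - Real.log (1 - s)
        = -(Real.log (1 - s) - Real.log (1 - t)) by ring,
      show Real.log s - Real.log t + -(Real.log (1 - s) - Real.log (1 - t))
        = -((Real.log t - Real.log s) + (Real.log (1 - s) - Real.log (1 - t))) by ring,
      neg_div_neg_eq]

lemma mono2 {s t t' : ℝ} (hs : 0 < s) (hs1 : s < 1) (ht : 0 < t) (ht1 : t < 1)
    (ht' : 0 < t') (ht'1 : t' < 1) (htt : t < t') : Gfun s t < Gfun s t' := by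
  rcases lt_trichotomy s t with hst | hst | hst
  · -- s < t < t'
    set La := Real.log t - Real.log s with hLa
    set Lb := Real.log (1 - s) - Real.log (1 - t) with hLb
    set La' := Real.log t' - Real.log s with hLa'
    set Lb' := Real.log (1 - s) - Real.log (1 - t') with hLb'
    have ha1 : (t - s) / t < La := lt_log_sub hs hst
    have hb2 : Lb < (t - s) / (1 - t) := by
      have h0 := log_sub_lt (by linarith : (0:ℝ) < 1 - t) (by linarith : 1 - t < 1 - s)
      convert h0 using 2 <;> ring
    have hd2 : La' - La < (t' - t) / t := by
      have h0 := log_sub_lt ht htt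
      have e : La' - La = Real.log t' - Real.log t := by rw [hLa, hLa']; ring
      rw [e]; exact h0
    have he1 : (t' - t) / (1 - t) < Lb' - Lb := by
      have h0 := lt_log_sub (by linarith : (0:ℝ) < 1 - t') (by linarith : 1 - t' < 1 - t)
      have e : Lb' - Lb = Real.log (1 - t) - Real.log (1 - t') := by rw [hLb, hLb']; ring
      have e2 : (1 - t - (1 - t')) / (1 - t) = (t' - t) / (1 - t) := by ring
      rw [e]; rw [e2] at h0; exact h0
    clear_value La Lb La' Lb'
    have ha : 0 < La := lt_trans (div_pos (by linarith) ht) ha1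
    have hb : 0 < Lb := by
      have h0 := Real.log_lt_log (by linarith : (0:ℝ) < 1 - t) (by linarith : 1 - t < 1 - s)
      rw [hLb]; linarith
    have ha' : 0 < La' := by
      have h0 := Real.log_lt_log ht htt
      rw [hLa']; rw [hLa] at ha; linarith
    have hb' : 0 < Lb' := by
      have h0 := Real.log_lt_log (by linarith : (0:ℝ) < 1 - t')
        (by linarith : 1 - t' < 1 - t)
      rw [hLb']; rw [hLb] at hb; linarith
    have key : La' * Lb < La * Lb' := by
      have hdd : 0 < La' - La := by
        have h0 := Real.log_lt_log ht htt
        rw [hLa, hLa']; linarith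
      have k1 : (La' - La) * Lb < ((t' - t) / t) * ((t - s) / (1 - t)) :=
        mul_lt_mul hd2 (le_of_lt hb2) hb (le_of_lt (div_pos (by linarith) ht))
      have k2 : ((t - s) / t) * ((t' - t) / (1 - t)) < La * (Lb' - Lb) :=
        mul_lt_mul ha1 (le_of_lt he1) (div_pos (by linarith) (by linarith)) (le_of_lt ha)
      have keq : ((t' - t) / t) * ((t - s) / (1 - t))
          = ((t - s) / t) * ((t' - t) / (1 - t)) := by ring
      nlinarith
    rw [Gval hs hs1 ht ht1 hst.ne, Gval hs hs1 ht' ht'1 (hst.trans htt).ne]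
    rw [div_lt_div_iff₀ (by rw [← hLa, ← hLb]; linarith)
      (by rw [← hLa', ← hLb']; linarith)]
    rw [← hLa, ← hLb, ← hLa', ← hLb']
    nlinarith
  · -- t = s < t'
    have h3 : s < t' := hst ▸ htt
    rw [← hst, show Gfun s s = s from if_pos rfl]
    exact (ordered hs h3 ht'1).1
  · -- t < s
    rcases lt_trichotomy t' s with h2 | h2 | h2
    · -- t < t' < s
      set A := Real.log s - Real.log t with hA
      set B := Real.log (1 - t) - Real.log (1 - s) with hB
      set A' := Real.log s - Real.log t' with hA'
      set B' := Real.log (1 - t') - Real.log (1 - s) with hB'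
      set d := Real.log t' - Real.log t with hd
      set e := Real.log (1 - t) - Real.log (1 - t') with he
      have hApos : 0 < A := by
        have := Real.log_lt_log ht hst; rw [hA]; linarith
      have hA'pos : 0 < A' := by
        have := Real.log_lt_log ht' h2; rw [hA']; linarith
      have hBpos : 0 < B := by
        have := Real.log_lt_log (by linarith : (0:ℝ) < 1 - s)
          (by linarith : 1 - s < 1 - t); rw [hB]; linarith
      have hB'pos : 0 < B' := by
        have := Real.log_lt_log (by linarith : (0:ℝ) < 1 - s)
          (by linarith : 1 - s < 1 - t'); rw [hB']; linarith
      have hdpos : 0 < d := by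
        have := Real.log_lt_log ht htt; rw [hd]; linarith
      have hepos : 0 < e := by
        have := Real.log_lt_log (by linarith : (0:ℝ) < 1 - t')
          (by linarith : 1 - t' < 1 - t); rw [he]; linarith
      have hAd : A = A' + d := by rw [hA, hA', hd]; ring
      have hBe : B = B' + e := by rw [hB, hB', he]; ring
      have k1 : A' < (s - t') / t' := by rw [hA']; exact log_sub_lt ht' h2
      have k2 : e < (t' - t) / (1 - t') := by
        have h0 := log_sub_lt (by linarith : (0:ℝ) < 1 - t')
          (by linarith : 1 - t' < 1 - t)
        have e2 : (1 - t - (1 - t')) / (1 - t') = (t' - t) / (1 - t') := by ring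
        rw [he]; rw [e2] at h0; exact h0
      have k3 : (t' - t) / t' < d := by
        have h0 := lt_log_sub ht htt; rw [hd]; exact h0
      have k4 : (s - t') / (1 - t') < B' := by
        have h0 := lt_log_sub (by linarith : (0:ℝ) < 1 - s)
          (by linarith : 1 - s < 1 - t')
        have e2 : (1 - t' - (1 - s)) / (1 - t') = (s - t') / (1 - t') := by ring
        rw [hB']; rw [e2] at h0; exact h0
      clear_value A B A' B' d e
      have key : A' * B < A * B' := by
        have m1 : A' * e < ((s - t') / t') * ((t' - t) / (1 - t')) :=
          mul_lt_mul k1 (le_of_lt k2) hepos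
            (le_of_lt (div_pos (by linarith) ht'))
        have m2 : ((t' - t) / t') * ((s - t') / (1 - t')) < d * B' :=
          mul_lt_mul k3 (le_of_lt k4) (div_pos (by linarith) (by linarith))
            (le_of_lt hdpos)
        have meq : ((s - t') / t') * ((t' - t) / (1 - t'))
            = ((t' - t) / t') * ((s - t') / (1 - t')) := by ring
        nlinarith
      rw [Gval hs hs1 ht ht1 hst.ne', Gval hs hs1 ht' ht'1 h2.ne',
        show Real.log (1 - s) - Real.log (1 - t)
          = -B by rw [hB]; ring,
        show Real.log t - Real.log s + -B = -(A + B) by rw [hA, hB]; ring,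
        show Real.log (1 - s) - Real.log (1 - t')
          = -B' by rw [hB']; ring,
        show Real.log t' - Real.log s + -B' = -(A' + B') by rw [hA', hB']; ring,
        neg_div_neg_eq, neg_div_neg_eq]
      rw [div_lt_div_iff₀ (by linarith) (by linarith)]
      nlinarith
    · -- t < t' = s
      rw [h2, show Gfun s s = s from if_pos rfl]
      have := (ordered ht hst hs1).2
      rwa [Gsymm ht ht1 hs hs1] at this
    · -- t < s < t'
      have l1 : Gfun s t < s := by
        have := (ordered ht hst hs1).2
        rwa [Gsymm ht ht1 hs hs1] at this
      have l2 : s < Gfun s t' := (ordered hs h2 ht'1).1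
      linarith

/-- Lemma: properties of the critical-value function `G`.
`G` maps `(0,1)²` into `(0,1)`, is strictly increasing in each argument on `(0,1)`, and
satisfies `s < G(s,t) < t` whenever `0 < s < t < 1`. -/
theorem statement16 :
    (∀ s t : ℝ, s ∈ Set.Ioo (0 : ℝ) 1 → t ∈ Set.Ioo (0 : ℝ) 1 →
      Gfun s t ∈ Set.Ioo (0 : ℝ) 1) ∧
    (∀ s s' t : ℝ, s ∈ Set.Ioo (0 : ℝ) 1 → s' ∈ Set.Ioo (0 : ℝ) 1 →
      t ∈ Set.Ioo (0 : ℝ) 1 → s < s' → Gfun s t < Gfun s' t) ∧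
    (∀ s t t' : ℝ, s ∈ Set.Ioo (0 : ℝ) 1 → t ∈ Set.Ioo (0 : ℝ) 1 →
      t' ∈ Set.Ioo (0 : ℝ) 1 → t < t' → Gfun s t < Gfun s t') ∧
    (∀ s t : ℝ, 0 < s → s < t → t < 1 → s < Gfun s t ∧ Gfun s t < t) := by
  refine ⟨?_, ?_, ?_, fun s t hs hst ht1 => ordered hs hst ht1⟩
  · rintro s t ⟨hs, hs1⟩ ⟨ht, ht1⟩
    rcases lt_trichotomy s t with h | h | h
    · have := ordered hs h ht1
      exact ⟨lt_trans hs this.1, lt_trans this.2 ht1⟩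
    · subst h; rw [Gfun, if_pos rfl]; exact ⟨hs, hs1⟩
    · have := ordered ht h hs1
      rw [Gsymm hs hs1 ht ht1]
      exact ⟨lt_trans ht this.1, lt_trans this.2 hs1⟩
  · rintro s s' t ⟨hs, hs1⟩ ⟨hs', hs'1⟩ ⟨ht, ht1⟩ h
    rw [Gsymm hs hs1 ht ht1, Gsymm hs' hs'1 ht ht1]
    exact mono2 ht ht1 hs hs1 hs' hs'1 h
  · rintro s t t' ⟨hs, hs1⟩ ⟨ht, ht1⟩ ⟨ht', ht'1⟩ h
    exact mono2 hs hs1 ht ht1 ht' ht'1 h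


end PrivacyPaper
end

section
/- Let k ∈ ℕ, ε ∈ [0,∞), and let Q1 be a channel from X to Z such that ω_H^{(Q1)}(kε) < ∞. If the image family Q1P = { Q1P : P ∈ P } is convex, then ω_H^{(Q1)}(kε) ≤ k²·ω_H^{(Q1)}(ε). -/
open MeasureTheory ProbabilityTheory ENNReal

namespace PrivacyPaper

variable {X Z Ω : Type*} [MeasurableSpace X] [MeasurableSpace Z] [MeasurableSpace Ω]

lemma sqrt_mix_one (a b t : ℝ) (ha : 0 ≤ a) (hb : 0 ≤ b) (ht0 : 0 ≤ t) (ht1 : t ≤ 1) :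
    (Real.sqrt a - Real.sqrt ((1-t)*a + t*b))^2 ≤ t * (Real.sqrt a - Real.sqrt b)^2 := by
  set u := Real.sqrt a with hu
  set v := Real.sqrt b with hv
  set c := Real.sqrt ((1-t)*a + t*b) with hc
  have hmix : 0 ≤ (1-t)*a + t*b :=
    add_nonneg (mul_nonneg (by linarith) ha) (mul_nonneg ht0 hb)
  have hc2 : c^2 = (1-t)*a + t*b := Real.sq_sqrt hmix
  have hu2 : u^2 = a := Real.sq_sqrt ha
  have hv2 : v^2 = b := Real.sq_sqrt hb
  have hu0 : 0 ≤ u := Real.sqrt_nonneg _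
  have hv0 : 0 ≤ v := Real.sqrt_nonneg _
  have hc0 : 0 ≤ c := Real.sqrt_nonneg _
  have hlhs0 : 0 ≤ (1-t)*u + t*v := add_nonneg (mul_nonneg (by linarith) hu0) (mul_nonneg ht0 hv0)
  have hconc : (1-t)*u + t*v ≤ c := by
    rw [hc]
    rw [show (1-t)*a + t*b = (1-t)*u^2 + t*v^2 by rw [hu2, hv2]]
    rw [Real.le_sqrt hlhs0 (by nlinarith [sq_nonneg u, sq_nonneg v])]
    nlinarith [mul_nonneg (mul_nonneg ht0 (sub_nonneg.mpr ht1)) (sq_nonneg (u-v))]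
  nlinarith [mul_nonneg hu0 (sub_nonneg.mpr hconc)]

lemma sqrt_mix_diff (a b s t : ℝ) (ha : 0 ≤ a) (hb : 0 ≤ b) (hs : 0 ≤ s) (hst : s ≤ t)
    (ht : t ≤ 1) :
    (Real.sqrt ((1-s)*a + s*b) - Real.sqrt ((1-t)*a + t*b))^2
      ≤ (t-s) * (Real.sqrt a - Real.sqrt b)^2 := by
  rcases eq_or_lt_of_le (hs.trans hst) with h0 | htpos
  · have hs0 : s = 0 := le_antisymm (hst.trans h0.symm.le) hs
    rw [← h0, hs0]; simp
  · set B := (1-t)*a + t*b with hB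
    have hB0 : 0 ≤ B := add_nonneg (mul_nonneg (by linarith) ha) (mul_nonneg (hs.trans hst) hb)
    set c := s/t with hcdef
    have hc0 : 0 ≤ c := div_nonneg hs htpos.le
    have hc1 : c ≤ 1 := (div_le_one htpos).mpr hst
    have hkey : (1-s)*a + s*b = (1-(1-c))*B + (1-c)*a := by
      rw [hB, hcdef]
      have hX : s / t * t = s := div_mul_cancel₀ s htpos.ne'
      linear_combination (a - b) * hX
    have h1 : (Real.sqrt B - Real.sqrt ((1-(1-c))*B + (1-c)*a))^2
        ≤ (1-c) * (Real.sqrt B - Real.sqrt a)^2 :=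
      sqrt_mix_one B a (1-c) hB0 ha (by linarith) (by linarith)
    have h2 : (Real.sqrt a - Real.sqrt ((1-t)*a + t*b))^2
        ≤ t * (Real.sqrt a - Real.sqrt b)^2 := sqrt_mix_one a b t ha hb (hs.trans hst) ht
    rw [hkey]
    have e1 : (Real.sqrt ((1-(1-c))*B + (1-c)*a) - Real.sqrt B)^2
        = (Real.sqrt B - Real.sqrt ((1-(1-c))*B + (1-c)*a))^2 := by ring
    have e2 : (Real.sqrt B - Real.sqrt a)^2 = (Real.sqrt a - Real.sqrt B)^2 := by ring
    have hfin : (1-c) * t = t - s := by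
      rw [hcdef, sub_mul, one_mul, div_mul_cancel₀ s htpos.ne']
    calc (Real.sqrt ((1-(1-c))*B + (1-c)*a) - Real.sqrt B)^2
        ≤ (1-c) * (Real.sqrt a - Real.sqrt B)^2 := by rw [e1]; rw [e2] at h1; exact h1
      _ ≤ (1-c) * (t * (Real.sqrt a - Real.sqrt b)^2) := by
          apply mul_le_mul_of_nonneg_left _ (by linarith)
          exact h2
      _ = (t-s) * (Real.sqrt a - Real.sqrt b)^2 := by rw [← hfin]; ring

lemma dH_withDensity (ρ : Measure Ω) [SigmaFinite ρ] {f g : Ω → ℝ≥0∞}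
    (hf : Measurable f) (hg : Measurable g)
    (hfi : ∫⁻ x, f x ∂ρ ≠ ⊤) (hgi : ∫⁻ x, g x ∂ρ ≠ ⊤) :
    dH (ρ.withDensity f) (ρ.withDensity g)
      = Real.sqrt (∫ x, (Real.sqrt (f x).toReal - Real.sqrt (g x).toReal)^2 ∂ρ) := by
  have hμfin : IsFiniteMeasure (ρ.withDensity f) := isFiniteMeasure_withDensity hfi
  have hνfin : IsFiniteMeasure (ρ.withDensity g) := isFiniteMeasure_withDensity hgi
  set μ := ρ.withDensity f with hμdef
  set ν := ρ.withDensity g with hνdef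
  set d : Ω → ℝ≥0∞ := fun x => f x + g x with hd
  have hdm : Measurable d := hf.add hg
  have hdi : ∫⁻ x, d x ∂ρ ≠ ⊤ := by
    rw [hd]
    simp only [lintegral_add_left hf]
    exact ENNReal.add_ne_top.mpr ⟨hfi, hgi⟩
  have hπ : μ + ν = ρ.withDensity d := by
    rw [hμdef, hνdef, hd, ← withDensity_add_left hf g]; rfl
  haveI : IsFiniteMeasure (μ + ν) := by infer_instance
  set F : Ω → ℝ≥0∞ := fun x => f x / d x with hF
  set G : Ω → ℝ≥0∞ := fun x => g x / d x with hG
  have hFm : Measurable F := hf.div hdm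
  have hGm : Measurable G := hg.div hdm
  have haef : ∀ᵐ x ∂ρ, f x < ⊤ := ae_lt_top hf hfi
  have haeg : ∀ᵐ x ∂ρ, g x < ⊤ := ae_lt_top hg hgi
  have hμ_eq : (μ + ν).withDensity F = μ := by
    rw [hπ, ← withDensity_mul ρ hdm hFm, hμdef]
    apply withDensity_congr_ae
    filter_upwards [haef, haeg] with x hfx hgx
    simp only [Pi.mul_apply, hF, hd]
    rcases eq_or_ne (f x + g x) 0 with h0 | h0
    · have : f x = 0 := by
        have := add_eq_zero.mp h0
        exact this.1
      rw [h0, this]; simp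
    · exact ENNReal.mul_div_cancel h0 (by simp [hfx.ne, hgx.ne])
  have hν_eq : (μ + ν).withDensity G = ν := by
    rw [hπ, ← withDensity_mul ρ hdm hGm, hνdef]
    apply withDensity_congr_ae
    filter_upwards [haef, haeg] with x hfx hgx
    simp only [Pi.mul_apply, hG, hd]
    rcases eq_or_ne (f x + g x) 0 with h0 | h0
    · have : g x = 0 := (add_eq_zero.mp h0).2
      rw [h0, this]; simp
    · exact ENNReal.mul_div_cancel h0 (by simp [hfx.ne, hgx.ne])
  have hrn1 : F =ᵐ[μ + ν] μ.rnDeriv (μ + ν) :=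
    Measure.eq_rnDeriv hFm Measure.MutuallySingular.zero_left (by rw [zero_add, hμ_eq])
  have hrn2 : G =ᵐ[μ + ν] ν.rnDeriv (μ + ν) :=
    Measure.eq_rnDeriv hGm Measure.MutuallySingular.zero_left (by rw [zero_add, hν_eq])
  rw [dH]
  congr 1
  have h1 : ∫ x, (Real.sqrt ((μ.rnDeriv (μ + ν)) x).toReal
        - Real.sqrt ((ν.rnDeriv (μ + ν)) x).toReal)^2 ∂(μ + ν)
      = ∫ x, (Real.sqrt (F x).toReal - Real.sqrt (G x).toReal)^2 ∂(μ + ν) := by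
    apply integral_congr_ae
    filter_upwards [hrn1, hrn2] with x e1 e2
    rw [← e1, ← e2]
  rw [h1]
  set dN : Ω → NNReal := fun x => (d x).toNNReal with hdN
  have hπ' : μ + ν = ρ.withDensity (fun x => (dN x : ℝ≥0∞)) := by
    rw [hπ]
    apply withDensity_congr_ae
    filter_upwards [haef, haeg] with x hfx hgx
    rw [hdN]
    exact (ENNReal.coe_toNNReal (by simp [hd, hfx.ne, hgx.ne])).symm
  have h2 : ∫ x, (Real.sqrt (F x).toReal - Real.sqrt (G x).toReal)^2 ∂(μ + ν)
      = ∫ x, dN x • ((Real.sqrt (F x).toReal - Real.sqrt (G x).toReal)^2) ∂ρ := by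
    rw [hπ']
    exact integral_withDensity_eq_integral_smul hdm.ennreal_toNNReal _
  rw [h2]
  apply integral_congr_ae
  filter_upwards [haef, haeg] with x hfx hgx
  have hFr : (F x).toReal = (f x).toReal / (d x).toReal := by
    rw [hF]; exact ENNReal.toReal_div _ _
  have hGr : (G x).toReal = (g x).toReal / (d x).toReal := by
    rw [hG]; exact ENNReal.toReal_div _ _
  have hdr : (d x).toReal = (f x).toReal + (g x).toReal := by
    rw [hd]; exact ENNReal.toReal_add hfx.ne hgx.ne
  have hdNr : (dN x : ℝ) = (d x).toReal := rfl
  rw [NNReal.smul_def, smul_eq_mul, hFr, hGr, hdNr]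
  rcases eq_or_lt_of_le (ENNReal.toReal_nonneg : 0 ≤ (d x).toReal) with hc0 | hcpos
  · have hf0 : (f x).toReal = 0 := by
      have h1 := ENNReal.toReal_nonneg (a := f x)
      have h2 := ENNReal.toReal_nonneg (a := g x)
      linarith [hdr, hc0.symm]
    have hg0 : (g x).toReal = 0 := by
      have h1 := ENNReal.toReal_nonneg (a := f x)
      linarith [hdr, hc0.symm]
    rw [← hc0, hf0, hg0]; simp
  · have hsC : Real.sqrt (d x).toReal ≠ 0 := by
      rw [ne_eq, Real.sqrt_eq_zero ENNReal.toReal_nonneg]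
      exact ne_of_gt hcpos
    rw [Real.sqrt_div ENNReal.toReal_nonneg, Real.sqrt_div ENNReal.toReal_nonneg,
      div_sub_div_same, div_pow, Real.sq_sqrt ENNReal.toReal_nonneg]
    rw [mul_div_cancel₀ _ (ne_of_gt hcpos)]

lemma dH_mix_le_s17 (μ0 μ1 : Measure Ω) [IsFiniteMeasure μ0] [IsFiniteMeasure μ1]
    {s t : ℝ} (hs : 0 ≤ s) (hst : s ≤ t) (ht : t ≤ 1) :
    dH (mix (1-s) μ0 μ1) (mix (1-t) μ0 μ1) ≤ Real.sqrt (t-s) * dH μ0 μ1 := by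
  set ρ := μ0 + μ1 with hρ
  have hac0 : μ0 ≪ ρ := Measure.absolutelyContinuous_of_le (Measure.le_add_right le_rfl)
  have hac1 : μ1 ≪ ρ := Measure.absolutelyContinuous_of_le (Measure.le_add_left le_rfl)
  set f := μ0.rnDeriv ρ with hfdef
  set g := μ1.rnDeriv ρ with hgdef
  have hfm : Measurable f := Measure.measurable_rnDeriv μ0 ρ
  have hgm : Measurable g := Measure.measurable_rnDeriv μ1 ρ
  have hfi : ∫⁻ x, f x ∂ρ ≠ ⊤ := (Measure.lintegral_rnDeriv_lt_top μ0 ρ).ne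
  have hgi : ∫⁻ x, g x ∂ρ ≠ ⊤ := (Measure.lintegral_rnDeriv_lt_top μ1 ρ).ne
  have hwd0 : ρ.withDensity f = μ0 := Measure.withDensity_rnDeriv_eq μ0 ρ hac0
  have hwd1 : ρ.withDensity g = μ1 := Measure.withDensity_rnDeriv_eq μ1 ρ hac1
  have haef : ∀ᵐ x ∂ρ, f x < ⊤ := ae_lt_top hfm hfi
  have haeg : ∀ᵐ x ∂ρ, g x < ⊤ := ae_lt_top hgm hgi
  have hmixrep : ∀ u : ℝ, mix (1-u) μ0 μ1
      = ρ.withDensity (fun x => ENNReal.ofReal (1-u) * f x + ENNReal.ofReal u * g x) := by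
    intro u
    rw [mix, show (1:ℝ) - (1 - u) = u by ring, ← hwd0, ← hwd1]
    rw [← withDensity_smul (ENNReal.ofReal (1-u)) hfm, ← withDensity_smul (ENNReal.ofReal u) hgm]
    rw [← withDensity_add_left (hfm.const_smul (ENNReal.ofReal (1-u)))]
    rfl
  have hint : ∀ u : ℝ, (∫⁻ x, (ENNReal.ofReal (1-u) * f x + ENNReal.ofReal u * g x) ∂ρ) ≠ ⊤ := by
    intro u
    rw [lintegral_add_left (hfm.const_mul _), lintegral_const_mul _ hfm, lintegral_const_mul _ hgm]
    exact ENNReal.add_ne_top.mpr ⟨ENNReal.mul_ne_top ENNReal.ofReal_ne_top hfi,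
      ENNReal.mul_ne_top ENNReal.ofReal_ne_top hgi⟩
  have hmeas : ∀ u : ℝ, Measurable (fun x => ENNReal.ofReal (1-u) * f x + ENNReal.ofReal u * g x) :=
    fun u => (hfm.const_mul _).add (hgm.const_mul _)
  rw [hmixrep s, hmixrep t,
    dH_withDensity ρ (hmeas s) (hmeas t) (hint s) (hint t)]
  have hdH01 : dH μ0 μ1 = Real.sqrt (∫ x, (Real.sqrt (f x).toReal - Real.sqrt (g x).toReal)^2 ∂ρ) := rfl
  rw [hdH01, ← Real.sqrt_mul (sub_nonneg.mpr hst)]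
  apply Real.sqrt_le_sqrt
  set v : Ω → ℝ := fun x => (Real.sqrt (f x).toReal - Real.sqrt (g x).toReal)^2 with hv
  have hvm : Measurable v := ((hfm.ennreal_toReal.sqrt).sub (hgm.ennreal_toReal.sqrt)).pow_const 2
  have hvint : Integrable v ρ := by
    have hbound : Integrable (fun x => 2 * (f x).toReal + 2 * (g x).toReal) ρ :=
      (((integrable_toReal_of_lintegral_ne_top hfm.aemeasurable hfi).const_mul 2)).add
        (((integrable_toReal_of_lintegral_ne_top hgm.aemeasurable hgi).const_mul 2))
    refine hbound.mono' hvm.aestronglyMeasurable ?_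
    filter_upwards with x
    have h1 : 0 ≤ (f x).toReal := ENNReal.toReal_nonneg
    have h2 : 0 ≤ (g x).toReal := ENNReal.toReal_nonneg
    have e1 : Real.sqrt (f x).toReal ^ 2 = (f x).toReal := Real.sq_sqrt h1
    have e2 : Real.sqrt (g x).toReal ^ 2 = (g x).toReal := Real.sq_sqrt h2
    simp only [hv, Real.norm_eq_abs]
    rw [abs_of_nonneg (sq_nonneg _)]
    nlinarith [sq_nonneg (Real.sqrt (f x).toReal + Real.sqrt (g x).toReal)]
  have hmono : ∫ x, (Real.sqrt ((ENNReal.ofReal (1-s) * f x + ENNReal.ofReal s * g x)).toReal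
        - Real.sqrt ((ENNReal.ofReal (1-t) * f x + ENNReal.ofReal t * g x)).toReal)^2 ∂ρ
      ≤ ∫ x, (t-s) * v x ∂ρ := by
    apply integral_mono_of_nonneg
    · filter_upwards with x; positivity
    · exact hvint.const_mul _
    · filter_upwards [haef, haeg] with x hfx hgx
      have hts : ∀ u : ℝ, 0 ≤ u → u ≤ 1 →
          ((ENNReal.ofReal (1-u) * f x + ENNReal.ofReal u * g x)).toReal
            = (1-u) * (f x).toReal + u * (g x).toReal := by
        intro u hu0 hu1
        rw [ENNReal.toReal_add (ENNReal.mul_ne_top ENNReal.ofReal_ne_top hfx.ne)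
          (ENNReal.mul_ne_top ENNReal.ofReal_ne_top hgx.ne), ENNReal.toReal_mul,
          ENNReal.toReal_mul, ENNReal.toReal_ofReal (by linarith), ENNReal.toReal_ofReal hu0]
      rw [hts s hs (hst.trans ht), hts t (hs.trans hst) ht]
      exact sqrt_mix_diff (f x).toReal (g x).toReal s t ENNReal.toReal_nonneg
        ENNReal.toReal_nonneg hs hst ht
  calc _ ≤ ∫ x, (t-s) * v x ∂ρ := hmono
    _ = (t-s) * ∫ x, v x ∂ρ := integral_smul (t-s) v
    _ = (t-s) * ∫ x, (Real.sqrt (f x).toReal - Real.sqrt (g x).toReal)^2 ∂ρ := rfl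

lemma le_modulus {d : Measure X → Measure X → ℝ} {P : Set (Measure X)} {θ : Measure X → ℝ}
    {ε : ℝ} {P0 P1 : Measure X} (h0 : P0 ∈ P) (h1 : P1 ∈ P) (hd : d P0 P1 ≤ ε) :
    ENNReal.ofReal |θ P0 - θ P1| ≤ modulus d P θ ε := by
  rw [modulus]
  exact le_iSup_of_le P0 (le_iSup_of_le h0 (le_iSup_of_le P1 (le_iSup_of_le h1
    (le_iSup_of_le hd le_rfl))))

lemma push_isProbabilityMeasure (c : X → Measure Z) (hc : Measurable c)
    (hm : ∀ x, IsProbabilityMeasure (c x)) (P : Measure X) [IsProbabilityMeasure P] :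
    IsProbabilityMeasure (push c P) := by
  constructor
  rw [push, Measure.bind_apply MeasurableSet.univ hc.aemeasurable]
  simp [measure_univ]

/-- Lemma: quadratic homogeneity of the privatized Hellinger modulus.
Let `k ∈ ℕ`, `ε ≥ 0` and let `Q1` be a channel from `X` to `Z` with
`ω_H^{(Q1)}(kε) < ∞`. If the image family `{Q1 P : P ∈ 𝒫}` is convex, then
`ω_H^{(Q1)}(kε) ≤ k² ω_H^{(Q1)}(ε)`. -/
theorem statement17 {X Z : Type*} [MeasurableSpace X] [MeasurableSpace Z]
    (k : ℕ) (hk : 0 < k) (ε : ℝ) (hε : 0 ≤ ε)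
    (Q1 : Kernel X Z) (hQ1 : IsMarkovKernel Q1)
    (P : Set (Measure X)) (hP : ∀ μ ∈ P, IsProbabilityMeasure μ) (θ : Measure X → ℝ)
    (hfin : omegaHQ (fun x => Q1 x) P θ ((k : ℝ) * ε) < ⊤)
    (hconv : ConvexMeasureSet ((fun μ : Measure X => push (fun x => Q1 x) μ) '' P)) :
    omegaHQ (fun x => Q1 x) P θ ((k : ℝ) * ε)
      ≤ (k : ℝ≥0∞) ^ 2 * omegaHQ (fun x => Q1 x) P θ ε := by
  classical
  set c : X → Measure Z := fun x => Q1 x with hc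
  have hcm : Measurable c := Q1.measurable
  have hcprob : ∀ x, IsProbabilityMeasure (c x) := fun x => hQ1.isProbabilityMeasure x
  set m : ℕ := k^2 with hm
  have hm0 : 0 < m := pow_pos hk 2
  have hmR : (0:ℝ) < (m:ℝ) := Nat.cast_pos.mpr hm0
  -- reduce to a pointwise bound
  rw [omegaHQ, modulus]
  refine iSup_le fun P0 => iSup_le fun hP0 => iSup_le fun P1 => iSup_le fun hP1 =>
    iSup_le fun hd => ?_
  haveI : IsProbabilityMeasure P0 := hP P0 hP0
  haveI : IsProbabilityMeasure P1 := hP P1 hP1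
  set μ0 : Measure Z := push c P0 with hμ0
  set μ1 : Measure Z := push c P1 with hμ1
  haveI : IsProbabilityMeasure μ0 := push_isProbabilityMeasure c hcm hcprob P0
  haveI : IsProbabilityMeasure μ1 := push_isProbabilityMeasure c hcm hcprob P1
  set Mix : ℕ → Measure Z := fun j => mix (1 - (j:ℝ)/(m:ℝ)) μ0 μ1 with hMixDef
  have hMix0 : Mix 0 = μ0 := by
    simp only [hMixDef, Nat.cast_zero, zero_div, sub_zero, mix, ENNReal.ofReal_one, one_smul,
      sub_self, ENNReal.ofReal_zero, zero_smul, add_zero]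
  have hMixm : Mix m = μ1 := by
    simp only [hMixDef, mix, div_self hmR.ne', sub_self, ENNReal.ofReal_zero, zero_smul,
      sub_zero, ENNReal.ofReal_one, one_smul, zero_add]
  -- chain of measures in P
  have H : ∀ j : ℕ, ∃ R : Measure X, R ∈ P ∧ (j ≤ m → push c R = Mix j)
      ∧ (j = 0 → R = P0) ∧ (j = m → R = P1) := by
    intro j
    rcases eq_or_ne j 0 with rfl | hj0
    · exact ⟨P0, hP0, fun _ => hMix0.symm, fun _ => rfl, fun hjm => absurd hjm.symm hm0.ne'⟩
    rcases eq_or_ne j m with rfl | hjm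
    · exact ⟨P1, hP1, fun _ => hMixm.symm, fun h => absurd h hj0, fun _ => rfl⟩
    by_cases hjle : j ≤ m
    · have hlam0 : 0 ≤ 1 - (j:ℝ)/(m:ℝ) := by
        rw [sub_nonneg, div_le_one hmR]
        exact_mod_cast hjle
      have hlam1 : 1 - (j:ℝ)/(m:ℝ) ≤ 1 := by
        have : 0 ≤ (j:ℝ)/(m:ℝ) := by positivity
        linarith
      have hmem := hconv μ0 ⟨P0, hP0, rfl⟩ μ1 ⟨P1, hP1, rfl⟩ _ hlam0 hlam1
      obtain ⟨R, hRP, hReq⟩ := hmem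
      exact ⟨R, hRP, fun _ => hReq, fun h => absurd h hj0, fun h => absurd h hjm⟩
    · exact ⟨P0, hP0, fun h => absurd h hjle, fun h => absurd h hj0, fun h => absurd h hjm⟩
  choose R hRP hRpush hR0 hRm using H
  -- each step has small distance
  have hstep : ∀ j, j < m → ENNReal.ofReal |θ (R j) - θ (R (j+1))|
      ≤ omegaHQ c P θ ε := by
    intro j hj
    have hdist : dH (push c (R j)) (push c (R (j+1))) ≤ ε := by
      rw [hRpush j hj.le, hRpush (j+1) hj]
      simp only [hMixDef]
      have hj1m : ((j:ℝ)+1) ≤ (m:ℝ) := by exact_mod_cast hj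
      have hs0 : 0 ≤ (j:ℝ)/(m:ℝ) := by positivity
      have hst : (j:ℝ)/(m:ℝ) ≤ ((j:ℝ)+1)/(m:ℝ) := by gcongr; linarith
      have ht1 : ((j:ℝ)+1)/(m:ℝ) ≤ 1 := by rw [div_le_one hmR]; exact hj1m
      have key := dH_mix_le_s17 μ0 μ1 hs0 hst ht1
      have hcast : ((j+1:ℕ):ℝ)/(m:ℝ) = ((j:ℝ)+1)/(m:ℝ) := by push_cast; ring
      rw [hcast]
      refine key.trans ?_
      have hkpos : (0:ℝ) < k := Nat.cast_pos.mpr hk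
      have hsq : ((j:ℝ)+1)/(m:ℝ) - (j:ℝ)/(m:ℝ) = (1/(k:ℝ))^2 := by
        rw [div_sub_div_same, hm]
        push_cast
        rw [show ((j:ℝ) + 1 - j) = 1 by ring]
        rw [div_pow, one_pow]
      rw [hsq, Real.sqrt_sq (by positivity)]
      have hD : dH μ0 μ1 ≤ (k:ℝ)*ε := hd
      calc 1/(k:ℝ) * dH μ0 μ1 ≤ 1/(k:ℝ) * ((k:ℝ)*ε) :=
            mul_le_mul_of_nonneg_left hD (by positivity)
        _ = ε := by field_simp
    exact le_modulus (hRP j) (hRP (j+1)) hdist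
  -- telescoping
  have tele : θ P0 - θ P1 = ∑ j ∈ Finset.range m, (θ (R j) - θ (R (j+1))) := by
    rw [Finset.sum_range_sub' (fun j => θ (R j)) m, hR0 0 rfl, hRm m rfl]
  calc ENNReal.ofReal |θ P0 - θ P1|
      = ENNReal.ofReal |∑ j ∈ Finset.range m, (θ (R j) - θ (R (j+1)))| := by rw [← tele]
    _ ≤ ENNReal.ofReal (∑ j ∈ Finset.range m, |θ (R j) - θ (R (j+1))|) :=
        ENNReal.ofReal_le_ofReal (Finset.abs_sum_le_sum_abs _ _)
    _ = ∑ j ∈ Finset.range m, ENNReal.ofReal |θ (R j) - θ (R (j+1))| :=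
        ENNReal.ofReal_sum_of_nonneg (fun j _ => abs_nonneg _)
    _ ≤ ∑ _j ∈ Finset.range m, omegaHQ c P θ ε :=
        Finset.sum_le_sum (fun j hj => hstep j (Finset.mem_range.mp hj))
    _ = (m : ℝ≥0∞) * omegaHQ c P θ ε := by
        rw [Finset.sum_const, Finset.card_range, nsmul_eq_mul]
    _ = (k : ℝ≥0∞)^2 * omegaHQ c P θ ε := by rw [hm]; push_cast; ring


end PrivacyPaper
end

section
/- Suppose Condition C holds with parameters k, t, s, D0, h0 and functions ℓ_h, and set r̄ = ∑_{j=1}^k s_j/t_j. Then for all 0 ≤ ε ≤ h0^{(1+r̄)·max_j t_j}, the total variation modulus satisfies ω_TV(ε) ≤ 4·D0·ε^{1/(1+r̄)}. If, in addition, sup_{P∈P} |E_P[ℓ_h] − θ(P)| = 0 for all h ∈ (0,h0]^k, then ω_TV(ε) ≤ 2·D0·h0^{−∑_{j=1}^k s_j}·ε for all ε > 0. -/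
open MeasureTheory ProbabilityTheory ENNReal

namespace PrivacyPaper

variable {X Z Ω : Type*} [MeasurableSpace X] [MeasurableSpace Z] [MeasurableSpace Ω]

section Statement18Aux

lemma dTV_bddAbove {Ω : Type*} [MeasurableSpace Ω] (P0 P1 : Measure Ω)
    [IsProbabilityMeasure P0] [IsProbabilityMeasure P1] :
    BddAbove (Set.range fun A : {A : Set Ω // MeasurableSet A} =>
      |(P0 A.1).toReal - (P1 A.1).toReal|) := by
  refine ⟨1, ?_⟩
  rintro _ ⟨A, rfl⟩
  have h0 : (P0 A.1).toReal ≤ 1 := by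
    have := prob_le_one (μ := P0) (s := A.1)
    simpa using ENNReal.toReal_le_of_le_ofReal zero_le_one (by simpa using this)
  have h1 : (P1 A.1).toReal ≤ 1 := by
    have := prob_le_one (μ := P1) (s := A.1)
    simpa using ENNReal.toReal_le_of_le_ofReal zero_le_one (by simpa using this)
  have h0' : 0 ≤ (P0 A.1).toReal := ENNReal.toReal_nonneg
  have h1' : 0 ≤ (P1 A.1).toReal := ENNReal.toReal_nonneg
  rw [abs_sub_le_iff]
  constructor <;> linarith

lemma le_dTV {Ω : Type*} [MeasurableSpace Ω] (P0 P1 : Measure Ω)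
    [IsProbabilityMeasure P0] [IsProbabilityMeasure P1] {A : Set Ω} (hA : MeasurableSet A) :
    (P0 A).toReal - (P1 A).toReal ≤ dTV P0 P1 :=
  le_trans (le_abs_self _) (le_ciSup (dTV_bddAbove P0 P1) ⟨A, hA⟩)

lemma abs_integral_sub_le_tv {X : Type*} [MeasurableSpace X] (P0 P1 : Measure X)
    [IsProbabilityMeasure P0] [IsProbabilityMeasure P1] (f : X → ℝ) (hf : Measurable f)
    {B : ℝ} (hB0 : 0 ≤ B) (hB : ∀ x, |f x| ≤ B) :
    |(∫ x, f x ∂P0) - ∫ x, f x ∂P1| ≤ 2 * B * dTV P0 P1 := by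
  set μ : Measure X := P0 + P1 with hμ
  have hac0 : P0 ≪ μ := (Measure.le_add_right le_rfl).absolutelyContinuous
  have hac1 : P1 ≪ μ := by
    rw [hμ]
    exact (Measure.le_add_left le_rfl).absolutelyContinuous
  set g0 : X → ℝ := fun x => (P0.rnDeriv μ x).toReal with hg0
  set g1 : X → ℝ := fun x => (P1.rnDeriv μ x).toReal with hg1
  have hmg0 : Measurable g0 := (Measure.measurable_rnDeriv P0 μ).ennreal_toReal
  have hmg1 : Measurable g1 := (Measure.measurable_rnDeriv P1 μ).ennreal_toReal
  have hig0 : Integrable g0 μ := Measure.integrable_toReal_rnDeriv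
  have hig1 : Integrable g1 μ := Measure.integrable_toReal_rnDeriv
  have hI0 : ∫ x, f x ∂P0 = ∫ x, g0 x * f x ∂μ := by
    rw [← integral_rnDeriv_smul hac0]
    simp [hg0, smul_eq_mul]
  have hI1 : ∫ x, f x ∂P1 = ∫ x, g1 x * f x ∂μ := by
    rw [← integral_rnDeriv_smul hac1]
    simp [hg1, smul_eq_mul]
  have hifg0 : Integrable (fun x => g0 x * f x) μ := by
    refine Integrable.mono' (hig0.const_mul B) ((hmg0.mul hf)).aestronglyMeasurable ?_
    filter_upwards with x
    rw [norm_mul, Real.norm_eq_abs, Real.norm_eq_abs,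
      abs_of_nonneg (by exact ENNReal.toReal_nonneg)]
    calc g0 x * |f x| ≤ g0 x * B := mul_le_mul_of_nonneg_left (hB x) ENNReal.toReal_nonneg
      _ = B * g0 x := mul_comm _ _
  have hifg1 : Integrable (fun x => g1 x * f x) μ := by
    refine Integrable.mono' (hig1.const_mul B) ((hmg1.mul hf)).aestronglyMeasurable ?_
    filter_upwards with x
    rw [norm_mul, Real.norm_eq_abs, Real.norm_eq_abs,
      abs_of_nonneg (by exact ENNReal.toReal_nonneg)]
    calc g1 x * |f x| ≤ g1 x * B := mul_le_mul_of_nonneg_left (hB x) ENNReal.toReal_nonneg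
      _ = B * g1 x := mul_comm _ _
  have hfi : Integrable (fun x => (g0 x - g1 x) * f x) μ := by
    have := hifg0.sub hifg1
    refine this.congr (Filter.Eventually.of_forall fun x => ?_)
    simp [Pi.sub_apply]
    ring
  have key : (∫ x, |g0 x - g1 x| ∂μ) ≤ 2 * dTV P0 P1 := by
    set A : Set X := {x | g1 x ≤ g0 x} with hA
    have hAm : MeasurableSet A := measurableSet_le hmg1 hmg0
    have hsplit : (∫ x, |g0 x - g1 x| ∂μ) =
        (∫ x in A, |g0 x - g1 x| ∂μ) + ∫ x in Aᶜ, |g0 x - g1 x| ∂μ :=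
      (integral_add_compl hAm ((hig0.sub hig1).abs)).symm
    have e1 : (∫ x in A, |g0 x - g1 x| ∂μ) = (P0 A).toReal - (P1 A).toReal := by
      rw [setIntegral_congr_fun hAm (g := fun x => g0 x - g1 x) ?_]
      · rw [integral_sub (hig0.restrict) (hig1.restrict),
          Measure.setIntegral_toReal_rnDeriv hac0, Measure.setIntegral_toReal_rnDeriv hac1]; rfl
      · intro x hx
        exact abs_of_nonneg (sub_nonneg.mpr hx)
    have e2 : (∫ x in Aᶜ, |g0 x - g1 x| ∂μ) = (P1 Aᶜ).toReal - (P0 Aᶜ).toReal := by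
      rw [setIntegral_congr_fun hAm.compl (g := fun x => g1 x - g0 x) ?_]
      · rw [integral_sub (hig1.restrict) (hig0.restrict),
          Measure.setIntegral_toReal_rnDeriv hac1, Measure.setIntegral_toReal_rnDeriv hac0]; rfl
      · intro x hx
        simp only [Set.mem_compl_iff, hA, Set.mem_setOf_eq] at hx
        show |g0 x - g1 x| = g1 x - g0 x
        rw [abs_sub_comm]
        exact abs_of_nonneg (sub_nonneg.mpr (le_of_not_ge hx))
    rw [hsplit, e1, e2]
    have b1 := le_dTV P0 P1 hAm
    have b2 : (P1 Aᶜ).toReal - (P0 Aᶜ).toReal ≤ dTV P0 P1 := by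
      have := le_ciSup (dTV_bddAbove P0 P1) ⟨Aᶜ, hAm.compl⟩
      refine le_trans ?_ this
      rw [abs_sub_comm]
      exact le_abs_self _
    linarith
  calc |(∫ x, f x ∂P0) - ∫ x, f x ∂P1| = |∫ x, (g0 x - g1 x) * f x ∂μ| := by
        rw [hI0, hI1, ← integral_sub hifg0 hifg1]
        congr 1
        refine integral_congr_ae (Filter.Eventually.of_forall fun x => ?_)
        ring
    _ ≤ ∫ x, |(g0 x - g1 x) * f x| ∂μ := by
        simpa [Real.norm_eq_abs, abs_mul] using
          norm_integral_le_integral_norm (fun x => (g0 x - g1 x) * f x) (μ := μ)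
    _ ≤ ∫ x, |g0 x - g1 x| * B ∂μ := by
        refine integral_mono hfi.abs ((hig0.sub hig1).abs.mul_const B) fun x => ?_
        rw [abs_mul]
        exact mul_le_mul_of_nonneg_left (hB x) (abs_nonneg _)
    _ = B * ∫ x, |g0 x - g1 x| ∂μ := by rw [← integral_const_mul]; congr 1; ext x; ring
    _ ≤ B * (2 * dTV P0 P1) := mul_le_mul_of_nonneg_left key hB0
    _ = 2 * B * dTV P0 P1 := by ring

lemma omegaTV_le_of_forall {X : Type*} [MeasurableSpace X] (P : Set (Measure X))
    (θ : Measure X → ℝ) (ε C : ℝ)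
    (hC : ∀ P0 ∈ P, ∀ P1 ∈ P, dTV P0 P1 ≤ ε → |θ P0 - θ P1| ≤ C) :
    omegaTV P θ ε ≤ ENNReal.ofReal C := by
  simp only [omegaTV, modulus]
  exact iSup_le fun P0 => iSup_le fun hP0 => iSup_le fun P1 => iSup_le fun hP1 =>
    iSup_le fun hd => ENNReal.ofReal_le_ofReal (hC _ hP0 _ hP1 hd)

end Statement18Aux

/-- Lemma: Condition C implies an upper bound on the TV-modulus.
Under Condition C with parameters `k, t, s, D0, h0` and functions `ℓ_h`, and with
`r̄ = ∑_j s_j/t_j`, for all `0 ≤ ε ≤ h0^{(1+r̄)·max_j t_j}` it holds that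
`ω_TV(ε) ≤ 4 D0 ε^{1/(1+r̄)}`; if moreover the bias vanishes,
`sup_{P ∈ 𝒫} |E_P[ℓ_h] - θ(P)| = 0` for all `h ∈ (0,h0]^k`, then
`ω_TV(ε) ≤ 2 D0 h0^{-∑_j s_j} ε` for all `ε > 0`. -/
theorem statement18 {X : Type*} [MeasurableSpace X]
    (P : Set (Measure X)) (hP : ∀ μ ∈ P, IsProbabilityMeasure μ) (θ : Measure X → ℝ)
    (k : ℕ) (hk : 0 < k) (t s : Fin k → ℝ) (ht : ∀ j, 0 < t j) (hs : ∀ j, 0 ≤ s j)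
    (D0 h0 : ℝ) (hD0 : 0 < D0) (hh0 : 0 < h0) (hh01 : h0 ≤ 1)
    (ℓ : (Fin k → ℝ) → X → ℝ) (hmeas : ∀ h, Measurable (ℓ h))
    (hbound : ∀ h : Fin k → ℝ, (∀ j, 0 < h j ∧ h j ≤ h0) →
      ∀ x, |ℓ h x| ≤ D0 * ∏ j, h j ^ (-(s j)))
    (hbias : ∀ h : Fin k → ℝ, (∀ j, 0 < h j ∧ h j ≤ h0) →
      ∀ μ ∈ P, |(∫ x, ℓ h x ∂μ) - θ μ| ≤ D0 * (1 / k) * ∑ j, h j ^ t j) :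
    (∀ ε : ℝ, 0 ≤ ε → ε ≤ h0 ^ ((1 + ∑ j, s j / t j) * ⨆ j, t j) →
        omegaTV P θ ε ≤ ENNReal.ofReal (4 * D0 * ε ^ (1 / (1 + ∑ j, s j / t j)))) ∧
      ((∀ h : Fin k → ℝ, (∀ j, 0 < h j ∧ h j ≤ h0) → ∀ μ ∈ P, (∫ x, ℓ h x ∂μ) = θ μ) →
        ∀ ε : ℝ, 0 < ε →
          omegaTV P θ ε ≤ ENNReal.ofReal (2 * D0 * h0 ^ (-(∑ j, s j)) * ε)) := by
  have hkR : (0:ℝ) < k := Nat.cast_pos.mpr hk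
  set r : ℝ := ∑ j, s j / t j with hrdef
  have hrnn : 0 ≤ r := Finset.sum_nonneg fun j _ => div_nonneg (hs j) (ht j).le
  set c : ℝ := 1 + r with hcdef
  have hc : 0 < c := by rw [hcdef]; linarith
  have hcne : c ≠ 0 := hc.ne'
  haveI : Nonempty (Fin k) := ⟨⟨0, hk⟩⟩
  set T : ℝ := ⨆ j, t j with hTdef
  have hTt : ∀ j, t j ≤ T := fun j => le_ciSup (Set.Finite.bddAbove (Set.finite_range t)) j
  have hT : 0 < T := lt_of_lt_of_le (ht ⟨0, hk⟩) (hTt _)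
  have htne : ∀ j, t j ≠ 0 := fun j => (ht j).ne'
  have key : ∀ ε : ℝ, 0 < ε → ε ≤ h0 ^ (c * T) → ∀ P0 ∈ P, ∀ P1 ∈ P,
      dTV P0 P1 ≤ ε → |θ P0 - θ P1| ≤ 4 * D0 * ε ^ (1 / c) := by
    intro ε hε hεle P0 hP0 P1 hP1 hd
    haveI := hP P0 hP0
    haveI := hP P1 hP1
    set h : Fin k → ℝ := fun j => ε ^ (1 / (c * t j)) with hhdef
    have hval : ∀ j, 0 < h j ∧ h j ≤ h0 := by
      intro j
      have hpos : 0 < h j := Real.rpow_pos_of_pos hε _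
      refine ⟨hpos, ?_⟩
      have hexp : 0 ≤ 1 / (c * t j) := (div_pos one_pos (mul_pos hc (ht j))).le
      calc h j ≤ (h0 ^ (c * T)) ^ (1 / (c * t j)) := Real.rpow_le_rpow hε.le hεle hexp
        _ = h0 ^ (c * T * (1 / (c * t j))) := (Real.rpow_mul hh0.le _ _).symm
        _ = h0 ^ (T / t j) := by
            congr 1
            rw [mul_one_div, mul_div_mul_left _ _ hcne]
        _ ≤ h0 ^ (1 : ℝ) :=
            Real.rpow_le_rpow_of_exponent_ge hh0 hh01 ((one_le_div (ht j)).mpr (hTt j))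
        _ = h0 := Real.rpow_one h0
    have hjt : ∀ j, h j ^ t j = ε ^ (1 / c) := by
      intro j
      simp only [hhdef]
      rw [← Real.rpow_mul hε.le]
      congr 1
      field_simp
      exact div_self (htne j)
    have hsum : ∑ j, h j ^ t j = (k : ℝ) * ε ^ (1 / c) := by
      rw [Finset.sum_congr rfl fun j _ => hjt j]
      simp [Finset.sum_const, nsmul_eq_mul]
    have hprod : ∏ j, h j ^ (-(s j)) = ε ^ (-(r / c)) := by
      have e1 : ∀ j : Fin k, h j ^ (-(s j)) = ε ^ (1 / (c * t j) * (-(s j))) := by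
        intro j
        simp only [hhdef]
        rw [← Real.rpow_mul hε.le]
      rw [Finset.prod_congr rfl fun j _ => e1 j, ← Real.rpow_sum_of_pos hε]
      congr 1
      have e2 : ∀ j : Fin k, 1 / (c * t j) * (-(s j)) = -(s j / t j) / c := by
        intro j
        field_simp
      rw [Finset.sum_congr rfl fun j _ => e2 j, ← Finset.sum_div, Finset.sum_neg_distrib,
        neg_div, hrdef]
    have hBpos : 0 < D0 * ∏ j, h j ^ (-(s j)) :=
      mul_pos hD0 (Finset.prod_pos fun j _ => Real.rpow_pos_of_pos (hval j).1 _)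
    have hint := abs_integral_sub_le_tv P0 P1 (ℓ h) (hmeas h) hBpos.le (hbound h hval)
    have b0 := hbias h hval P0 hP0
    have b1 := hbias h hval P1 hP1
    have b0' : |θ P0 - ∫ x, ℓ h x ∂P0| ≤ D0 * (1 / (k : ℝ)) * ∑ j, h j ^ t j := by
      rw [abs_sub_comm]; exact b0
    have tri : |θ P0 - θ P1| ≤ |θ P0 - ∫ x, ℓ h x ∂P0| +
        |(∫ x, ℓ h x ∂P0) - ∫ x, ℓ h x ∂P1| + |(∫ x, ℓ h x ∂P1) - θ P1| := by
      have h1 := abs_sub_le (θ P0) (∫ x, ℓ h x ∂P0) (θ P1)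
      have h2 := abs_sub_le (∫ x, ℓ h x ∂P0) (∫ x, ℓ h x ∂P1) (θ P1)
      linarith
    have hdd : 2 * (D0 * ∏ j, h j ^ (-(s j))) * dTV P0 P1 ≤
        2 * (D0 * ∏ j, h j ^ (-(s j))) * ε := mul_le_mul_of_nonneg_left hd (by linarith)
    have e2 : 2 * (D0 * ∏ j, h j ^ (-(s j))) * ε = 2 * D0 * ε ^ (1 / c) := by
      rw [hprod]
      have e3 : ε ^ (-(r / c)) * ε = ε ^ (1 / c) := by
        nth_rewrite 2 [← Real.rpow_one ε]
        rw [← Real.rpow_add hε]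
        congr 1
        rw [hcdef]
        have : (1 : ℝ) + r ≠ 0 := by rw [← hcdef]; exact hcne
        field_simp
        ring
      calc 2 * (D0 * ε ^ (-(r / c))) * ε = 2 * D0 * (ε ^ (-(r / c)) * ε) := by ring
        _ = 2 * D0 * ε ^ (1 / c) := by rw [e3]
    have e4 : D0 * (1 / (k : ℝ)) * ∑ j, h j ^ t j = D0 * ε ^ (1 / c) := by
      rw [hsum]
      field_simp
    linarith
  constructor
  · intro ε hε0 hεle
    rcases hε0.eq_or_lt with heq | hlt
    · have hle : omegaTV P θ ε ≤ ENNReal.ofReal 0 := by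
        refine omegaTV_le_of_forall P θ ε 0 fun P0 hP0 P1 hP1 hd => ?_
        refine le_of_forall_pos_le_add fun δ hδ => ?_
        have hδD : 0 < δ / (4 * D0) := by positivity
        set ε' : ℝ := min ((δ / (4 * D0)) ^ c) (h0 ^ (c * T)) with hε'def
        have hε'pos : 0 < ε' :=
          lt_min (Real.rpow_pos_of_pos hδD _) (Real.rpow_pos_of_pos hh0 _)
        have hkey := key ε' hε'pos (min_le_right _ _) P0 hP0 P1 hP1
          (hd.trans (by rw [← heq]; exact hε'pos.le))
        have h2 : ε' ^ (1 / c) ≤ ((δ / (4 * D0)) ^ c) ^ (1 / c) :=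
          Real.rpow_le_rpow hε'pos.le (min_le_left _ _) (by positivity)
        have h3 : ((δ / (4 * D0)) ^ c) ^ (1 / c) = δ / (4 * D0) := by
          rw [← Real.rpow_mul hδD.le, mul_one_div_cancel hcne, Real.rpow_one]
        have h4 : 4 * D0 * ε' ^ (1 / c) ≤ δ := by
          calc 4 * D0 * ε' ^ (1 / c) ≤ 4 * D0 * (δ / (4 * D0)) := by
                rw [← h3]
                exact mul_le_mul_of_nonneg_left h2 (by positivity)
            _ = δ := by field_simp
        linarith
      refine hle.trans ?_
      simp
    · exact omegaTV_le_of_forall P θ ε _ (key ε hlt hεle)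
  · intro hzero ε hε
    refine omegaTV_le_of_forall P θ ε _ fun P0 hP0 P1 hP1 hd => ?_
    haveI := hP P0 hP0
    haveI := hP P1 hP1
    set h : Fin k → ℝ := fun _ => h0 with hhdef
    have hval : ∀ j, 0 < h j ∧ h j ≤ h0 := fun j => ⟨hh0, le_rfl⟩
    have hprod : ∏ j, h j ^ (-(s j)) = h0 ^ (-(∑ j, s j)) := by
      simp only [hhdef]
      rw [← Finset.sum_neg_distrib, Real.rpow_sum_of_pos hh0]
    have hBpos : 0 < D0 * ∏ j, h j ^ (-(s j)) :=
      mul_pos hD0 (Finset.prod_pos fun j _ => Real.rpow_pos_of_pos (hval j).1 _)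
    have hint := abs_integral_sub_le_tv P0 P1 (ℓ h) (hmeas h) hBpos.le (hbound h hval)
    rw [hzero h hval P0 hP0, hzero h hval P1 hP1] at hint
    have hdd : 2 * (D0 * ∏ j, h j ^ (-(s j))) * dTV P0 P1 ≤
        2 * (D0 * ∏ j, h j ^ (-(s j))) * ε := mul_le_mul_of_nonneg_left hd (by linarith)
    have e1 : 2 * D0 * h0 ^ (-(∑ j, s j)) * ε = 2 * (D0 * ∏ j, h j ^ (-(s j))) * ε := by
      rw [hprod]
      ring
    rw [e1]
    linarith

end PrivacyPaper
end

section
/- Let α ∈ (0,∞) and let Q1 be an α-differentially private channel from X to Z, i.e. Q1(A|x) ≤ e^α·Q1(A|x') for all measurable A and all x, x' ∈ X. Then for all probability measures P0, P1 on X, d_H(Q1P0, Q1P1) ≤ e^{α/2}·d_TV(P0,P1); consequently, ω_TV(ε/e^{α/2}) ≤ ω_H^{(Q1)}(ε) for all ε ≥ 0. -/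
open MeasureTheory ProbabilityTheory ENNReal

namespace PrivacyPaper

variable {X Z Ω : Type*} [MeasurableSpace X] [MeasurableSpace Z] [MeasurableSpace Ω]

section Statement19Aux

variable {X' Z' : Type*} [MeasurableSpace X'] [MeasurableSpace Z']

lemma push_apply' (Q1 : Kernel X' Z') (π : Measure X') {A : Set Z'} (hA : MeasurableSet A) :
    push (fun x => Q1 x) π A = ∫⁻ x, Q1 x A ∂π :=
  Measure.bind_apply hA Q1.measurable.aemeasurable

lemma push_add' (Q1 : Kernel X' Z') (π ρ : Measure X') :
    push (fun x => Q1 x) (π + ρ) = push (fun x => Q1 x) π + push (fun x => Q1 x) ρ := by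
  ext A hA
  rw [Measure.add_apply, push_apply' Q1 _ hA, push_apply' Q1 _ hA, push_apply' Q1 _ hA,
    lintegral_add_measure]

lemma push_univ' (Q1 : Kernel X' Z') [IsMarkovKernel Q1] (π : Measure X') :
    push (fun x => Q1 x) π Set.univ = π Set.univ := by
  rw [push_apply' Q1 π MeasurableSet.univ]
  simp

lemma push_dp_bound {α : ℝ} (Q1 : Kernel X' Z')
    (hDP : ∀ A : Set Z', MeasurableSet A → ∀ x x' : X',
      Q1 x A ≤ ENNReal.ofReal (Real.exp α) * Q1 x' A)
    (π ρ : Measure X') {A : Set Z'} (hA : MeasurableSet A) :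
    ρ Set.univ * push (fun x => Q1 x) π A
      ≤ π Set.univ * ENNReal.ofReal (Real.exp α) * push (fun x => Q1 x) ρ A := by
  have h1 : ∀ x' : X', push (fun x => Q1 x) π A
      ≤ π Set.univ * ENNReal.ofReal (Real.exp α) * Q1 x' A := by
    intro x'
    rw [push_apply' Q1 π hA]
    calc ∫⁻ x, Q1 x A ∂π ≤ ∫⁻ _, ENNReal.ofReal (Real.exp α) * Q1 x' A ∂π :=
          lintegral_mono fun x => hDP A hA x x'
      _ = π Set.univ * ENNReal.ofReal (Real.exp α) * Q1 x' A := by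
          rw [lintegral_const]; ring
  calc ρ Set.univ * push (fun x => Q1 x) π A
      = ∫⁻ _, push (fun x => Q1 x) π A ∂ρ := by rw [lintegral_const]; ring
    _ ≤ ∫⁻ x', π Set.univ * ENNReal.ofReal (Real.exp α) * Q1 x' A ∂ρ :=
        lintegral_mono fun x' => h1 x'
    _ = π Set.univ * ENNReal.ofReal (Real.exp α) * push (fun x => Q1 x) ρ A := by
        rw [lintegral_const_mul _ (Q1.measurable_coe hA), push_apply' Q1 ρ hA]

lemma rnDeriv_le_const_of_le {μ ν : Measure Z'} [IsFiniteMeasure ν] (c : ℝ≥0∞)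
    (h : ∀ A : Set Z', MeasurableSet A → μ A ≤ c * ν A) :
    ∀ᵐ z ∂ν, μ.rnDeriv ν z ≤ c := by
  refine ae_le_of_forall_setLIntegral_le_of_sigmaFinite (Measure.measurable_rnDeriv μ ν)
    fun s hs _ => ?_
  rw [setLIntegral_const]
  exact (Measure.setLIntegral_rnDeriv_le s).trans (h s hs)

/-- The core estimate: Hellinger–TV bound for `α`-DP channels. -/
lemma dH_push_le {α : ℝ} (hα : 0 < α) (Q1 : Kernel X' Z') (hQ1 : IsMarkovKernel Q1)
    (hDP : ∀ A : Set Z', MeasurableSet A → ∀ x x' : X',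
      Q1 x A ≤ ENNReal.ofReal (Real.exp α) * Q1 x' A)
    (P0 P1 : Measure X') (h0 : IsProbabilityMeasure P0) (h1 : IsProbabilityMeasure P1) :
    dH (push (fun x => Q1 x) P0) (push (fun x => Q1 x) P1)
      ≤ Real.exp (α / 2) * dTV P0 P1 := by
  classical
  -- Hahn decomposition of the pair (P0, P1)
  obtain ⟨S, hS, hSle, hScle⟩ := hahn_decomposition (μ := P0) (ν := P1)
  set πp := P0.restrict S - P1.restrict S with hπp
  set πm := P1.restrict Sᶜ - P0.restrict Sᶜ with hπm
  have hle1 : P1.restrict S ≤ P0.restrict S := by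
    rw [Measure.le_iff]
    intro A hA
    rw [Measure.restrict_apply hA, Measure.restrict_apply hA]
    exact hSle _ (hA.inter hS) Set.inter_subset_right
  have hle2 : P0.restrict Sᶜ ≤ P1.restrict Sᶜ := by
    rw [Measure.le_iff]
    intro A hA
    rw [Measure.restrict_apply hA, Measure.restrict_apply hA]
    exact hScle _ (hA.inter hS.compl) Set.inter_subset_right
  have hpc : πp + P1.restrict S = P0.restrict S := Measure.sub_add_cancel_of_le hle1
  have hmc : πm + P0.restrict Sᶜ = P1.restrict Sᶜ := Measure.sub_add_cancel_of_le hle2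
  have key : P0 + πm = P1 + πp := by
    have e0 : P0.restrict S + P0.restrict Sᶜ = P0 := Measure.restrict_add_restrict_compl hS
    have e1 : P1.restrict S + P1.restrict Sᶜ = P1 := Measure.restrict_add_restrict_compl hS
    calc P0 + πm = (P0.restrict S + P0.restrict Sᶜ) + πm := by rw [e0]
      _ = P0.restrict S + (πm + P0.restrict Sᶜ) := by
          rw [add_assoc, add_comm (P0.restrict Sᶜ) πm]
      _ = P0.restrict S + P1.restrict Sᶜ := by rw [hmc]
      _ = (πp + P1.restrict S) + P1.restrict Sᶜ := by rw [hpc]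
      _ = πp + (P1.restrict S + P1.restrict Sᶜ) := by rw [add_assoc]
      _ = P1 + πp := by rw [e1, add_comm]
  set t := πp Set.univ with ht_def
  have ht_ne : t ≠ ∞ := measure_ne_top πp _
  have htm : πm Set.univ = t := by
    have h := congrArg (fun μ : Measure X' => μ Set.univ) key
    simp only [Measure.add_apply, measure_univ] at h
    exact (ENNReal.add_right_inj one_ne_top).mp h
  -- unfold dH and name the pushforward measures
  simp only [dH]
  set B0 := push (fun x => Q1 x) P0 with hB0
  set B1 := push (fun x => Q1 x) P1 with hB1
  set Bp := push (fun x => Q1 x) πp with hBpdef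
  set Bm := push (fun x => Q1 x) πm with hBmdef
  haveI : IsFiniteMeasure B0 := ⟨by rw [hB0, push_univ']; exact measure_lt_top P0 _⟩
  haveI : IsFiniteMeasure B1 := ⟨by rw [hB1, push_univ']; exact measure_lt_top P1 _⟩
  haveI : IsFiniteMeasure Bp := ⟨by rw [hBpdef, push_univ']; exact measure_lt_top πp _⟩
  haveI : IsFiniteMeasure Bm := ⟨by rw [hBmdef, push_univ']; exact measure_lt_top πm _⟩
  set ν := B0 + B1 with hν
  have key2 : B0 + Bm = B1 + Bp := by
    rw [hB0, hBmdef, hB1, hBpdef, ← push_add', ← push_add', key]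
  set E := ENNReal.ofReal (Real.exp α) with hE
  have hEne : E ≠ ∞ := ENNReal.ofReal_ne_top
  have hcne : t * E / 2 ≠ ∞ :=
    (ENNReal.div_lt_top (ENNReal.mul_ne_top ht_ne hEne) two_ne_zero).ne
  -- the DP domination of the pushforwards
  have hbound : ∀ π : Measure X', π Set.univ = t → ∀ A : Set Z', MeasurableSet A →
      push (fun x => Q1 x) π A ≤ t * E / 2 * ν A := by
    intro π hπ A hA
    have h := push_dp_bound Q1 hDP π (P0 + P1) hA
    rw [push_add'] at h
    have h2 : (P0 + P1) Set.univ = 2 := by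
      simp only [Measure.add_apply, measure_univ]
      norm_num
    rw [h2, hπ, ← hE, ← hB0, ← hB1, ← hν] at h
    -- h : 2 * push π A ≤ t * E * ν A
    have h3 : push (fun x => Q1 x) π A ≤ t * E * ν A / 2 := by
      rw [ENNReal.le_div_iff_mul_le (Or.inl two_ne_zero) (Or.inl (by norm_num))]
      rw [mul_comm]
      exact h
    calc push (fun x => Q1 x) π A ≤ t * E * ν A / 2 := h3
      _ = t * E / 2 * ν A := by
          rw [div_eq_mul_inv, div_eq_mul_inv, mul_right_comm]
  have hgp : ∀ᵐ z ∂ν, Bp.rnDeriv ν z ≤ t * E / 2 :=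
    rnDeriv_le_const_of_le _ (hbound πp rfl)
  have hgm : ∀ᵐ z ∂ν, Bm.rnDeriv ν z ≤ t * E / 2 :=
    rnDeriv_le_const_of_le _ (hbound πm htm)
  have h01 : ∀ᵐ z ∂ν, B0.rnDeriv ν z + B1.rnDeriv ν z = 1 := by
    have ha := Measure.rnDeriv_add' B0 B1 ν
    have hb := Measure.rnDeriv_self ν
    rw [← hν] at ha
    filter_upwards [ha, hb] with z h h'
    rw [Pi.add_apply] at h
    rw [← h, h']
  have hmix : ∀ᵐ z ∂ν, B0.rnDeriv ν z + Bm.rnDeriv ν z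
      = B1.rnDeriv ν z + Bp.rnDeriv ν z := by
    have e : (B0 + Bm).rnDeriv ν = (B1 + Bp).rnDeriv ν := by rw [key2]
    filter_upwards [Measure.rnDeriv_add' B0 Bm ν, Measure.rnDeriv_add' B1 Bp ν]
      with z ha hb
    rw [Pi.add_apply] at ha hb
    rw [← ha, ← hb, e]
  -- real-valued quantities
  set T := t.toReal with hT
  have hT0 : 0 ≤ T := ENNReal.toReal_nonneg
  set c1 : ℝ := T * Real.exp α / 2 with hc1
  have hc1' : (t * E / 2).toReal = c1 := by
    rw [ENNReal.toReal_div, ENNReal.toReal_mul, hE, ENNReal.toReal_ofReal (Real.exp_nonneg α)]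
    norm_num
    exact hc1.symm
  have hc10 : 0 ≤ c1 := by
    rw [hc1]
    positivity
  have hip : Integrable (fun z => (Bp.rnDeriv ν z).toReal) ν :=
    Measure.integrable_toReal_rnDeriv
  have him : Integrable (fun z => (Bm.rnDeriv ν z).toReal) ν :=
    Measure.integrable_toReal_rnDeriv
  set f := fun z => (Real.sqrt ((B0.rnDeriv ν z).toReal)
    - Real.sqrt ((B1.rnDeriv ν z).toReal)) ^ 2 with hfdef
  have hmeas_f : Measurable f := by
    apply Measurable.pow_const
    exact ((Measure.measurable_rnDeriv B0 ν).ennreal_toReal.sqrt).sub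
      ((Measure.measurable_rnDeriv B1 ν).ennreal_toReal.sqrt)
  have hfg : ∀ᵐ z ∂ν, f z ≤ c1 * ((Bp.rnDeriv ν z).toReal + (Bm.rnDeriv ν z).toReal) := by
    filter_upwards [h01, hmix, hgp, hgm, Measure.rnDeriv_lt_top B0 ν,
      Measure.rnDeriv_lt_top B1 ν, Measure.rnDeriv_lt_top Bp ν,
      Measure.rnDeriv_lt_top Bm ν] with z e1 e2 e3 e4 l0 l1 lp lm
    set a := (B0.rnDeriv ν z).toReal
    set b := (B1.rnDeriv ν z).toReal
    set p := (Bp.rnDeriv ν z).toReal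
    set q := (Bm.rnDeriv ν z).toReal
    have hab : a + b = 1 := by
      rw [← ENNReal.toReal_add l0.ne l1.ne, e1, ENNReal.toReal_one]
    have hpq : a + q = b + p := by
      have h := congrArg ENNReal.toReal e2
      rwa [ENNReal.toReal_add l0.ne lm.ne, ENNReal.toReal_add l1.ne lp.ne] at h
    have hple : p ≤ c1 := by
      rw [← hc1']
      exact ENNReal.toReal_mono hcne e3
    have hqle : q ≤ c1 := by
      rw [← hc1']
      exact ENNReal.toReal_mono hcne e4
    have ha0 : 0 ≤ a := ENNReal.toReal_nonneg
    have hb0 : 0 ≤ b := ENNReal.toReal_nonneg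
    have hp0 : 0 ≤ p := ENNReal.toReal_nonneg
    have hq0 : 0 ≤ q := ENNReal.toReal_nonneg
    have hsq : (Real.sqrt a - Real.sqrt b) ^ 2 ≤ (a - b) ^ 2 := by
      nlinarith [Real.sq_sqrt ha0, Real.sq_sqrt hb0, Real.sqrt_nonneg a, Real.sqrt_nonneg b,
        sq_nonneg (Real.sqrt a - Real.sqrt b),
        mul_nonneg (mul_nonneg (Real.sqrt_nonneg a) (Real.sqrt_nonneg b))
          (sq_nonneg (Real.sqrt a - Real.sqrt b))]
    have h2 : (a - b) ^ 2 ≤ c1 * (p + q) := by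
      have hd : a - b = p - q := by linarith
      rw [hd]
      nlinarith [mul_nonneg hp0 hq0, mul_nonneg (sub_nonneg.mpr hple) hp0,
        mul_nonneg (sub_nonneg.mpr hqle) hq0]
    exact hsq.trans h2
  have hint_g : Integrable
      (fun z => c1 * ((Bp.rnDeriv ν z).toReal + (Bm.rnDeriv ν z).toReal)) ν :=
    (hip.add him).const_mul c1
  have hint_f : Integrable f ν := by
    refine hint_g.mono hmeas_f.aestronglyMeasurable ?_
    filter_upwards [hfg] with z hz
    rw [Real.norm_eq_abs, Real.norm_eq_abs, abs_of_nonneg (sq_nonneg _)]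
    exact hz.trans (le_abs_self _)
  have h3 : ∫ z, (Bp.rnDeriv ν z).toReal ∂ν ≤ T := by
    have h := Measure.setIntegral_toReal_rnDeriv_le (μ := Bp) (ν := ν)
      (s := Set.univ) (measure_ne_top Bp _)
    rw [Measure.restrict_univ] at h
    have hBu : Bp Set.univ = t := by rw [hBpdef, push_univ']
    rwa [measureReal_def, hBu] at h
  have h4 : ∫ z, (Bm.rnDeriv ν z).toReal ∂ν ≤ T := by
    have h := Measure.setIntegral_toReal_rnDeriv_le (μ := Bm) (ν := ν)
      (s := Set.univ) (measure_ne_top Bm _)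
    rw [Measure.restrict_univ] at h
    have hBu : Bm Set.univ = t := by rw [hBmdef, push_univ', htm]
    rwa [measureReal_def, hBu] at h
  have hIf : ∫ z, f z ∂ν ≤ T ^ 2 * Real.exp α := by
    calc ∫ z, f z ∂ν
        ≤ ∫ z, c1 * ((Bp.rnDeriv ν z).toReal + (Bm.rnDeriv ν z).toReal) ∂ν :=
          integral_mono_ae hint_f hint_g hfg
      _ = c1 * ((∫ z, (Bp.rnDeriv ν z).toReal ∂ν) + ∫ z, (Bm.rnDeriv ν z).toReal ∂ν) := by
          rw [integral_const_mul, integral_add hip him]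
      _ ≤ c1 * (T + T) := by
          exact mul_le_mul_of_nonneg_left (add_le_add h3 h4) hc10
      _ = T ^ 2 * Real.exp α := by rw [hc1]; ring
  have hexp : Real.exp (α / 2) * Real.exp (α / 2) = Real.exp α := by
    rw [← Real.exp_add]
    norm_num
  have hdh : Real.sqrt (∫ z, f z ∂ν) ≤ T * Real.exp (α / 2) := by
    calc Real.sqrt (∫ z, f z ∂ν) ≤ Real.sqrt (T ^ 2 * Real.exp α) := Real.sqrt_le_sqrt hIf
      _ = T * Real.exp (α / 2) := by
          rw [show T ^ 2 * Real.exp α = (T * Real.exp (α / 2)) ^ 2 by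
            rw [mul_pow, pow_two (Real.exp (α / 2)), hexp]]
          exact Real.sqrt_sq (by positivity)
  have hTd : T ≤ dTV P0 P1 := by
    have hb : BddAbove (Set.range fun A : {A : Set X' // MeasurableSet A} =>
        |(P0 A.1).toReal - (P1 A.1).toReal|) := by
      refine ⟨1, ?_⟩
      rintro r ⟨A, rfl⟩
      have h0' : (P0 A.1).toReal ≤ 1 := by
        have := ENNReal.toReal_mono one_ne_top (prob_le_one (μ := P0) (s := A.1))
        simpa using this
      have h1' : (P1 A.1).toReal ≤ 1 := by
        have := ENNReal.toReal_mono one_ne_top (prob_le_one (μ := P1) (s := A.1))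
        simpa using this
      have h0'' : (0 : ℝ) ≤ (P0 A.1).toReal := ENNReal.toReal_nonneg
      have h1'' : (0 : ℝ) ≤ (P1 A.1).toReal := ENNReal.toReal_nonneg
      rw [abs_sub_le_iff]
      constructor <;> linarith
    have hTeq : T = (P0 S).toReal - (P1 S).toReal := by
      rw [hT, ht_def, hπp, Measure.sub_apply MeasurableSet.univ hle1,
        Measure.restrict_apply_univ, Measure.restrict_apply_univ,
        ENNReal.toReal_sub_of_le (hSle S hS subset_rfl) (measure_ne_top P0 S)]
    calc T = (P0 S).toReal - (P1 S).toReal := hTeq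
      _ ≤ |(P0 S).toReal - (P1 S).toReal| := le_abs_self _
      _ ≤ dTV P0 P1 := le_ciSup hb ⟨S, hS⟩
  calc Real.sqrt (∫ z, f z ∂ν) ≤ T * Real.exp (α / 2) := hdh
    _ ≤ dTV P0 P1 * Real.exp (α / 2) :=
        mul_le_mul_of_nonneg_right hTd (Real.exp_nonneg _)
    _ = Real.exp (α / 2) * dTV P0 P1 := mul_comm _ _

end Statement19Aux

/-- Lemma: Hellinger–TV bound for `α`-differentially private channels.
If `Q1` is an `α`-differentially private channel from `X` to `Z`, then for all probability
measures `P0, P1` on `X`, `d_H(Q1 P0, Q1 P1) ≤ e^{α/2} d_TV(P0, P1)`; consequently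
`ω_TV(ε/e^{α/2}) ≤ ω_H^{(Q1)}(ε)` for all `ε ≥ 0`. -/
theorem statement19 {X Z : Type*} [MeasurableSpace X] [MeasurableSpace Z]
    (α : ℝ) (hα : 0 < α) (Q1 : Kernel X Z) (hQ1 : IsMarkovKernel Q1)
    (hDP : ∀ A : Set Z, MeasurableSet A → ∀ x x' : X,
      Q1 x A ≤ ENNReal.ofReal (Real.exp α) * Q1 x' A)
    (P : Set (Measure X)) (hP : ∀ μ ∈ P, IsProbabilityMeasure μ) (θ : Measure X → ℝ) :
    (∀ P0 P1 : Measure X, IsProbabilityMeasure P0 → IsProbabilityMeasure P1 →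
      dH (push (fun x => Q1 x) P0) (push (fun x => Q1 x) P1)
        ≤ Real.exp (α / 2) * dTV P0 P1) ∧
    (∀ ε : ℝ, 0 ≤ ε →
      omegaTV P θ (ε / Real.exp (α / 2)) ≤ omegaHQ (fun x => Q1 x) P θ ε) := by
  have key := fun P0 P1 h0 h1 => dH_push_le hα Q1 hQ1 hDP P0 P1 h0 h1
  refine ⟨key, ?_⟩
  intro ε hε
  simp only [omegaTV, omegaHQ, modulus]
  refine iSup_le fun P0 => iSup_le fun h0 => iSup_le fun P1 => iSup_le fun h1 =>
    iSup_le fun hd => ?_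
  have hcond : dH (push (fun x => Q1 x) P0) (push (fun x => Q1 x) P1) ≤ ε := by
    calc dH (push (fun x => Q1 x) P0) (push (fun x => Q1 x) P1)
        ≤ Real.exp (α / 2) * dTV P0 P1 := key P0 P1 (hP P0 h0) (hP P1 h1)
      _ ≤ Real.exp (α / 2) * (ε / Real.exp (α / 2)) :=
          mul_le_mul_of_nonneg_left hd (Real.exp_nonneg _)
      _ = ε := by
          rw [mul_comm, div_mul_cancel₀ _ (Real.exp_ne_zero _)]
  exact le_iSup_of_le P0 (le_iSup_of_le h0 (le_iSup_of_le P1 (le_iSup_of_le h1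
    (le_iSup_of_le hcond le_rfl))))

end PrivacyPaper
end
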